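/- arXiv:2602.13655 — 7 statements merged into one kernel-verified Lean document; each statement's English description precedes it below -/
import Mathlib

section
/- For every k in [0,1), the quantity g'(k)·f(k) − g(k)·f'(k) equals (1/2)·∬_{u>v, (u,v)∈[0,1]²} √(uv)·(u−v)² / √((1-u)(1-v)(1-ku)³(1-kv)³) du dv, and in particular is strictly positive. -/
open MeasureTheory Set Real

namespace GFAux

/-- The common denominator factors. -/
lemma pos_facts {k u : ℝ} (hk0 : 0 ≤ k) (hk1 : k < 1) (hu : u ∈ Set.Ioo (0:ℝ) 1) :
    0 < 1 - u ∧ 0 < 1 - k * u := by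
  obtain ⟨h0, h1⟩ := hu
  constructor
  · linarith
  · nlinarith

/-- Integrability of `(1-u)^(-1/2)` on `(0,1)`. -/
lemma integrable_inv_sqrt_one_sub :
    IntegrableOn (fun u : ℝ => ((1 - u) ^ (-(1/2) : ℝ) : ℝ)) (Set.Ioo (0:ℝ) 1) := by
  have h : IntervalIntegrable (fun x : ℝ => x ^ (-(1/2) : ℝ)) volume 0 1 :=
    intervalIntegral.intervalIntegrable_rpow' (by norm_num)
  have h2 := h.comp_sub_left 1
  rw [show (1:ℝ) - 1 = 0 by norm_num, show (1:ℝ) - 0 = 1 by norm_num] at h2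
  have h3 : IntegrableOn (fun u : ℝ => ((1 - u) ^ (-(1/2) : ℝ) : ℝ)) (Set.Ioc (0:ℝ) 1) := by
    simpa [intervalIntegrable_iff, uIoc_of_le (by norm_num : (0:ℝ) ≤ 1)] using h2
  exact h3.mono_set Set.Ioo_subset_Ioc_self

/-- Integrability of the one-dimensional integrands. -/
lemma integrable_aux {k : ℝ} (hk0 : 0 ≤ k) (hk1 : k < 1) (p : ℝ) (hp : 0 ≤ p) (n : ℕ) :
    IntegrableOn (fun u : ℝ => u ^ p / Real.sqrt ((1 - u) * (1 - k * u) ^ n))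
      (Set.Ioo (0:ℝ) 1) := by
  have hk' : (0:ℝ) < 1 - k := by linarith
  have hC : 0 < Real.sqrt ((1 - k) ^ n) := Real.sqrt_pos.mpr (by positivity)
  have hint : IntegrableOn
      (fun u : ℝ => (Real.sqrt ((1 - k) ^ n))⁻¹ * (1 - u) ^ (-(1/2) : ℝ))
      (Set.Ioo (0:ℝ) 1) := integrable_inv_sqrt_one_sub.const_mul _
  refine Integrable.mono' hint ?_ ?_
  · apply Measurable.aestronglyMeasurable
    fun_prop
  · filter_upwards [ae_restrict_mem measurableSet_Ioo] with u hu
    obtain ⟨h1u, h2u⟩ := pos_facts hk0 hk1 hu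
    have hs : 0 < Real.sqrt (1 - u) := Real.sqrt_pos.mpr h1u
    have hup : u ^ p ≤ 1 := Real.rpow_le_one hu.1.le hu.2.le hp
    have hmono : (1 - k) ^ n ≤ (1 - k * u) ^ n := by
      apply pow_le_pow_left₀ hk'.le
      nlinarith [hu.1, hu.2]
    have hs2 : Real.sqrt ((1 - k) ^ n) ≤ Real.sqrt ((1 - k * u) ^ n) :=
      Real.sqrt_le_sqrt hmono
    rw [Real.norm_of_nonneg (div_nonneg (Real.rpow_nonneg hu.1.le p) (Real.sqrt_nonneg _))]
    rw [Real.sqrt_mul h1u.le]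
    have key : u ^ p / (Real.sqrt (1 - u) * Real.sqrt ((1 - k * u) ^ n)) ≤
        1 / (Real.sqrt (1 - u) * Real.sqrt ((1 - k) ^ n)) := by
      apply div_le_div₀ (by norm_num) hup (by positivity)
      exact mul_le_mul_of_nonneg_left hs2 hs.le
    refine key.trans (le_of_eq ?_)
    rw [Real.rpow_neg h1u.le, ← Real.sqrt_eq_rpow]
    field_simp

noncomputable def Ee (k u : ℝ) : ℝ := Real.sqrt ((1 - u) * (1 - k * u) ^ 3)
noncomputable def Dd (k u : ℝ) : ℝ := Real.sqrt ((1 - u) * (1 - k * u))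

noncomputable def F1 (k u : ℝ) : ℝ := u ^ ((5:ℝ)/2) / Ee k u
noncomputable def G1 (k v : ℝ) : ℝ := Real.sqrt v / Dd k v
noncomputable def F2 (k u : ℝ) : ℝ := u ^ ((3:ℝ)/2) / Ee k u
noncomputable def G2 (k v : ℝ) : ℝ := v ^ ((3:ℝ)/2) / Dd k v

noncomputable def HH (k : ℝ) (p : ℝ × ℝ) : ℝ := F1 k p.1 * G1 k p.2 - F2 k p.1 * G2 k p.2

noncomputable def SS (k : ℝ) (p : ℝ × ℝ) : ℝ :=
  Real.sqrt (p.1 * p.2) * (p.1 - p.2) ^ 2 /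
    Real.sqrt ((1 - p.1) * (1 - p.2) * (1 - k * p.1) ^ 3 * (1 - k * p.2) ^ 3)

def TT : Set (ℝ × ℝ) := {p : ℝ × ℝ | p.1 ∈ Set.Ioo (0:ℝ) 1 ∧ p.2 ∈ Set.Ioo (0:ℝ) 1 ∧ p.2 < p.1}
def TT' : Set (ℝ × ℝ) := {p : ℝ × ℝ | p.1 ∈ Set.Ioo (0:ℝ) 1 ∧ p.2 ∈ Set.Ioo (0:ℝ) 1 ∧ p.1 < p.2}

lemma isOpen_TT : IsOpen TT := by
  have : TT = ((Prod.fst ⁻¹' Set.Ioo (0:ℝ) 1) ∩ (Prod.snd ⁻¹' Set.Ioo (0:ℝ) 1)) ∩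
      {p : ℝ × ℝ | p.2 < p.1} := by
    ext p; simp [TT, Set.mem_Ioo]; tauto
  rw [this]
  exact (((isOpen_Ioo.preimage continuous_fst).inter (isOpen_Ioo.preimage continuous_snd)).inter
    (isOpen_lt continuous_snd continuous_fst))

lemma isOpen_TT' : IsOpen TT' := by
  have : TT' = ((Prod.fst ⁻¹' Set.Ioo (0:ℝ) 1) ∩ (Prod.snd ⁻¹' Set.Ioo (0:ℝ) 1)) ∩
      {p : ℝ × ℝ | p.1 < p.2} := by
    ext p; simp [TT', Set.mem_Ioo]; tauto
  rw [this]
  exact (((isOpen_Ioo.preimage continuous_fst).inter (isOpen_Ioo.preimage continuous_snd)).inter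
    (isOpen_lt continuous_fst continuous_snd))

lemma Ee_eq {k u : ℝ} (hk0 : 0 ≤ k) (hk1 : k < 1) (hu : u ∈ Set.Ioo (0:ℝ) 1) :
    Ee k u = (1 - k * u) * Dd k u := by
  obtain ⟨h1, h2⟩ := pos_facts hk0 hk1 hu
  rw [Ee, Dd, show (1 - u) * (1 - k * u) ^ 3 = ((1 - k * u) ^ 2) * ((1 - u) * (1 - k * u)) by ring,
    Real.sqrt_mul (by positivity), Real.sqrt_sq h2.le]

lemma rpow32 {u : ℝ} (hu : 0 < u) : u ^ ((3:ℝ)/2) = u * Real.sqrt u := by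
  rw [show (3:ℝ)/2 = 1 + 1/2 by norm_num, Real.rpow_add hu, Real.rpow_one, Real.sqrt_eq_rpow]

lemma rpow52 {u : ℝ} (hu : 0 < u) : u ^ ((5:ℝ)/2) = u ^ 2 * Real.sqrt u := by
  rw [show (5:ℝ)/2 = 2 + 1/2 by norm_num, Real.rpow_add hu, Real.sqrt_eq_rpow]
  norm_num [Real.rpow_two]

/-- The pointwise symmetrization identity. -/
lemma ptwise {k u v : ℝ} (hk0 : 0 ≤ k) (hk1 : k < 1) (hu : u ∈ Set.Ioo (0:ℝ) 1)
    (hv : v ∈ Set.Ioo (0:ℝ) 1) : HH k (u, v) + HH k (v, u) = SS k (u, v) := by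
  obtain ⟨h1u, h2u⟩ := pos_facts hk0 hk1 hu
  obtain ⟨h1v, h2v⟩ := pos_facts hk0 hk1 hv
  have hDu : 0 < Dd k u := Real.sqrt_pos.mpr (by positivity)
  have hDv : 0 < Dd k v := Real.sqrt_pos.mpr (by positivity)
  have hEu := Ee_eq hk0 hk1 hu
  have hEv := Ee_eq hk0 hk1 hv
  have hden : Real.sqrt ((1 - u) * (1 - v) * (1 - k * u) ^ 3 * (1 - k * v) ^ 3)
      = Ee k u * Ee k v := by
    rw [show (1 - u) * (1 - v) * (1 - k * u) ^ 3 * (1 - k * v) ^ 3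
        = ((1 - u) * (1 - k * u) ^ 3) * ((1 - v) * (1 - k * v) ^ 3) by ring,
      Real.sqrt_mul (by positivity)]
    rfl
  simp only [HH, SS, F1, G1, F2, G2]
  rw [hden, Real.sqrt_mul hu.1.le, rpow52 hu.1, rpow32 hu.1, rpow52 hv.1,
    rpow32 hv.1, hEu, hEv]
  have hku : 1 - u * k ≠ 0 := by rw [mul_comm]; exact h2u.ne'
  have hkv : 1 - v * k ≠ 0 := by rw [mul_comm]; exact h2v.ne'
  field_simp [h2u.ne', h2v.ne', hku, hkv]
  ring

lemma diag_null : (volume : Measure (ℝ × ℝ)) {p : ℝ × ℝ | p.1 = p.2} = 0 := by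
  have hm : MeasurableSet {p : ℝ × ℝ | p.1 = p.2} :=
    measurableSet_eq_fun measurable_fst measurable_snd
  rw [Measure.volume_eq_prod, Measure.prod_apply hm]
  have h : ∀ x : ℝ, (Prod.mk x ⁻¹' {p : ℝ × ℝ | p.1 = p.2}) = {x} := by
    intro x; ext y; simp [eq_comm]
  simp [h]

variable {k : ℝ}

lemma iF1 (hk0 : 0 ≤ k) (hk1 : k < 1) : IntegrableOn (F1 k) (Set.Ioo (0:ℝ) 1) := by
  exact integrable_aux hk0 hk1 ((5:ℝ)/2) (by norm_num) 3

lemma iF2 (hk0 : 0 ≤ k) (hk1 : k < 1) : IntegrableOn (F2 k) (Set.Ioo (0:ℝ) 1) := by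
  exact integrable_aux hk0 hk1 ((3:ℝ)/2) (by norm_num) 3

lemma iG1 (hk0 : 0 ≤ k) (hk1 : k < 1) : IntegrableOn (G1 k) (Set.Ioo (0:ℝ) 1) := by
  have h := integrable_aux hk0 hk1 ((1:ℝ)/2) (by norm_num) 1
  have he : G1 k = fun u : ℝ => u ^ ((1:ℝ)/2) / Real.sqrt ((1 - u) * (1 - k * u) ^ 1) := by
    funext u; rw [G1, Dd, Real.sqrt_eq_rpow, pow_one]
  rw [he]; exact h

lemma iG2 (hk0 : 0 ≤ k) (hk1 : k < 1) : IntegrableOn (G2 k) (Set.Ioo (0:ℝ) 1) := by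
  have h := integrable_aux hk0 hk1 ((3:ℝ)/2) (by norm_num) 1
  have he : G2 k = fun u : ℝ => u ^ ((3:ℝ)/2) / Real.sqrt ((1 - u) * (1 - k * u) ^ 1) := by
    funext u; rw [G2, Dd, pow_one]
  rw [he]; exact h

lemma hTTQ : TT ⊆ (Set.Ioo (0:ℝ) 1) ×ˢ (Set.Ioo (0:ℝ) 1) := by
  rintro ⟨u, v⟩ ⟨hu, hv, _⟩; exact ⟨hu, hv⟩

lemma hTT'Q : TT' ⊆ (Set.Ioo (0:ℝ) 1) ×ˢ (Set.Ioo (0:ℝ) 1) := by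
  rintro ⟨u, v⟩ ⟨hu, hv, _⟩; exact ⟨hu, hv⟩

lemma hswapemb : MeasurableEmbedding (Prod.swap : ℝ × ℝ → ℝ × ℝ) :=
  MeasurableEquiv.prodComm.measurableEmbedding

lemma hmp : MeasurePreserving (Prod.swap : ℝ × ℝ → ℝ × ℝ) volume volume := by
  rw [Measure.volume_eq_prod]; exact Measure.measurePreserving_swap

lemma hpre : (Prod.swap : ℝ × ℝ → ℝ × ℝ) ⁻¹' TT' = TT := by
  ext ⟨u, v⟩; simp only [TT, TT', Set.mem_preimage, Set.mem_setOf_eq, Prod.swap_prod_mk]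
  tauto

lemma hprodint (F G : ℝ → ℝ) (hF : IntegrableOn F (Set.Ioo (0:ℝ) 1))
    (hG : IntegrableOn G (Set.Ioo (0:ℝ) 1)) :
    IntegrableOn (fun p : ℝ × ℝ => F p.1 * G p.2)
      ((Set.Ioo (0:ℝ) 1) ×ˢ (Set.Ioo (0:ℝ) 1)) := by
  rw [IntegrableOn, Measure.volume_eq_prod, ← Measure.prod_restrict]
  exact hF.mul_prod hG

lemma hiHH (hk0 : 0 ≤ k) (hk1 : k < 1) :
    IntegrableOn (HH k) ((Set.Ioo (0:ℝ) 1) ×ˢ (Set.Ioo (0:ℝ) 1)) :=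
  (hprodint _ _ (iF1 hk0 hk1) (iG1 hk0 hk1)).sub (hprodint _ _ (iF2 hk0 hk1) (iG2 hk0 hk1))

lemma hiHswap (hk0 : 0 ≤ k) (hk1 : k < 1) :
    IntegrableOn (fun p : ℝ × ℝ => HH k (Prod.swap p)) TT := by
  have h : IntegrableOn (HH k ∘ Prod.swap) (Prod.swap ⁻¹' TT') volume :=
    (hmp.integrableOn_comp_preimage hswapemb).mpr ((hiHH hk0 hk1).mono_set hTT'Q)
  rw [hpre] at h; exact h

lemma iSS_TT (hk0 : 0 ≤ k) (hk1 : k < 1) : IntegrableOn (SS k) TT := by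
  have h : IntegrableOn (fun p : ℝ × ℝ => HH k p + HH k (Prod.swap p)) TT :=
    ((hiHH hk0 hk1).mono_set hTTQ).add (hiHswap hk0 hk1)
  refine IntegrableOn.congr_fun h ?_ isOpen_TT.measurableSet
  rintro ⟨u, v⟩ ⟨hu, hv, _⟩
  simpa using ptwise hk0 hk1 hu hv

lemma main_eq (hk0 : 0 ≤ k) (hk1 : k < 1) :
    (∫ u in Set.Ioo (0:ℝ) 1, F1 k u) * (∫ v in Set.Ioo (0:ℝ) 1, G1 k v)
      - (∫ u in Set.Ioo (0:ℝ) 1, F2 k u) * (∫ v in Set.Ioo (0:ℝ) 1, G2 k v)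
      = ∫ p in TT, SS k p := by
  have hQint_eq : ∫ p in (Set.Ioo (0:ℝ) 1) ×ˢ (Set.Ioo (0:ℝ) 1), HH k p
      = (∫ u in Set.Ioo (0:ℝ) 1, F1 k u) * (∫ v in Set.Ioo (0:ℝ) 1, G1 k v)
        - (∫ u in Set.Ioo (0:ℝ) 1, F2 k u) * (∫ v in Set.Ioo (0:ℝ) 1, G2 k v) := by
    have h1 : ∫ p in (Set.Ioo (0:ℝ) 1) ×ˢ (Set.Ioo (0:ℝ) 1), HH k p
        = (∫ p in (Set.Ioo (0:ℝ) 1) ×ˢ (Set.Ioo (0:ℝ) 1), F1 k p.1 * G1 k p.2)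
          - ∫ p in (Set.Ioo (0:ℝ) 1) ×ˢ (Set.Ioo (0:ℝ) 1), F2 k p.1 * G2 k p.2 :=
      integral_sub (hprodint _ _ (iF1 hk0 hk1) (iG1 hk0 hk1))
        (hprodint _ _ (iF2 hk0 hk1) (iG2 hk0 hk1))
    rw [h1, Measure.volume_eq_prod, setIntegral_prod_mul, setIntegral_prod_mul]
  have hdisj : Disjoint TT TT' := by
    rw [Set.disjoint_left]
    rintro ⟨u, v⟩ ⟨_, _, h1⟩ ⟨_, _, h2⟩
    exact absurd h2 (not_lt.mpr h1.le)
  have hae : ((Set.Ioo (0:ℝ) 1) ×ˢ (Set.Ioo (0:ℝ) 1) : Set (ℝ × ℝ)) =ᵐ[volume] ((TT ∪ TT' : Set (ℝ × ℝ))) := by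
    rw [ae_eq_set]
    constructor
    · refine measure_mono_null ?_ diag_null
      rintro ⟨u, v⟩ ⟨⟨hu, hv⟩, hn⟩
      by_contra h
      rcases lt_or_gt_of_ne h with h | h
      · exact hn (Or.inr ⟨hu, hv, h⟩)
      · exact hn (Or.inl ⟨hu, hv, h⟩)
    · have h : (TT ∪ TT') \ ((Set.Ioo (0:ℝ) 1) ×ˢ (Set.Ioo (0:ℝ) 1)) = ∅ := by
        rw [Set.diff_eq_empty]
        exact Set.union_subset hTTQ hTT'Q
      simp [h]
  have hsplit : ∫ p in (Set.Ioo (0:ℝ) 1) ×ˢ (Set.Ioo (0:ℝ) 1), HH k p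
      = (∫ p in TT, HH k p) + ∫ p in TT', HH k p := by
    rw [setIntegral_congr_set hae,
      setIntegral_union hdisj isOpen_TT'.measurableSet ((hiHH hk0 hk1).mono_set hTTQ)
        ((hiHH hk0 hk1).mono_set hTT'Q)]
  have hswap : ∫ p in TT', HH k p = ∫ p in TT, HH k (Prod.swap p) := by
    calc ∫ p in TT', HH k p
        = ∫ p in (Prod.swap : ℝ × ℝ → ℝ × ℝ) ⁻¹' TT', HH k (Prod.swap p) :=
          (hmp.setIntegral_preimage_emb hswapemb (HH k) TT').symm
      _ = ∫ p in TT, HH k (Prod.swap p) := by rw [hpre]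
  have hsum : (∫ p in TT, HH k p) + (∫ p in TT, HH k (Prod.swap p)) = ∫ p in TT, SS k p := by
    rw [← integral_add ((hiHH hk0 hk1).mono_set hTTQ) (hiHswap hk0 hk1)]
    apply setIntegral_congr_fun isOpen_TT.measurableSet
    rintro ⟨u, v⟩ ⟨hu, hv, _⟩
    simpa using ptwise hk0 hk1 hu hv
  rw [← hQint_eq, hsplit, hswap, hsum]

lemma SS_pos (hk0 : 0 ≤ k) (hk1 : k < 1) {p : ℝ × ℝ} (hp : p ∈ TT) : 0 < SS k p := by
  obtain ⟨hu, hv, hlt⟩ := hp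
  obtain ⟨h1u, h2u⟩ := pos_facts hk0 hk1 hu
  obtain ⟨h1v, h2v⟩ := pos_facts hk0 hk1 hv
  apply div_pos
  · apply mul_pos (Real.sqrt_pos.mpr (mul_pos hu.1 hv.1))
    have : p.1 - p.2 ≠ 0 := by intro h; exact absurd (by linarith : p.1 = p.2) (ne_of_gt hlt)
    positivity
  · exact Real.sqrt_pos.mpr (by positivity)

lemma pos_SS (hk0 : 0 ≤ k) (hk1 : k < 1) : 0 < ∫ p in TT, SS k p := by
  have hnn : 0 ≤ᵐ[volume.restrict TT] SS k := by
    filter_upwards [ae_restrict_mem isOpen_TT.measurableSet] with p hp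
    exact (SS_pos hk0 hk1 hp).le
  refine (setIntegral_pos_iff_support_of_nonneg_ae hnn (iSS_TT hk0 hk1)).mpr ?_
  have hsupp : TT ⊆ Function.support (SS k) ∩ TT :=
    fun p hp => ⟨(SS_pos hk0 hk1 hp).ne', hp⟩
  refine lt_of_lt_of_le ?_ (measure_mono hsupp)
  refine isOpen_TT.measure_pos volume ⟨((3:ℝ)/4, (1:ℝ)/4), ?_⟩
  refine ⟨?_, ?_, by norm_num⟩ <;> constructor <;> norm_num

end GFAux

theorem gprime_f_sub_g_fprime (k : ℝ) (hk : k ∈ Set.Ico (0:ℝ) 1) :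
    ((1/2) * ∫ u in Set.Ioo (0:ℝ) 1, u ^ ((5:ℝ)/2) / Real.sqrt ((1 - u) * (1 - k * u) ^ 3)) *
        (∫ u in Set.Ioo (0:ℝ) 1, Real.sqrt u / Real.sqrt ((1 - u) * (1 - k * u))) -
      (∫ u in Set.Ioo (0:ℝ) 1, u ^ ((3:ℝ)/2) / Real.sqrt ((1 - u) * (1 - k * u))) *
        ((1/2) * ∫ u in Set.Ioo (0:ℝ) 1, u ^ ((3:ℝ)/2) / Real.sqrt ((1 - u) * (1 - k * u) ^ 3)) =
      (1/2) * ∫ p in {p : ℝ × ℝ | p.1 ∈ Set.Ioo (0:ℝ) 1 ∧ p.2 ∈ Set.Ioo (0:ℝ) 1 ∧ p.2 < p.1},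
        Real.sqrt (p.1 * p.2) * (p.1 - p.2) ^ 2 /
          Real.sqrt ((1 - p.1) * (1 - p.2) * (1 - k * p.1) ^ 3 * (1 - k * p.2) ^ 3) ∧
    0 < ((1/2) * ∫ u in Set.Ioo (0:ℝ) 1, u ^ ((5:ℝ)/2) / Real.sqrt ((1 - u) * (1 - k * u) ^ 3)) *
        (∫ u in Set.Ioo (0:ℝ) 1, Real.sqrt u / Real.sqrt ((1 - u) * (1 - k * u))) -
      (∫ u in Set.Ioo (0:ℝ) 1, u ^ ((3:ℝ)/2) / Real.sqrt ((1 - u) * (1 - k * u))) *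
        ((1/2) * ∫ u in Set.Ioo (0:ℝ) 1, u ^ ((3:ℝ)/2) / Real.sqrt ((1 - u) * (1 - k * u) ^ 3)) := by
  obtain ⟨hk0, hk1⟩ := hk
  have key : (∫ u in Set.Ioo (0:ℝ) 1, u ^ ((5:ℝ)/2) / Real.sqrt ((1 - u) * (1 - k * u) ^ 3)) *
      (∫ u in Set.Ioo (0:ℝ) 1, Real.sqrt u / Real.sqrt ((1 - u) * (1 - k * u))) -
      (∫ u in Set.Ioo (0:ℝ) 1, u ^ ((3:ℝ)/2) / Real.sqrt ((1 - u) * (1 - k * u) ^ 3)) *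
      (∫ u in Set.Ioo (0:ℝ) 1, u ^ ((3:ℝ)/2) / Real.sqrt ((1 - u) * (1 - k * u))) =
      ∫ p in {p : ℝ × ℝ | p.1 ∈ Set.Ioo (0:ℝ) 1 ∧ p.2 ∈ Set.Ioo (0:ℝ) 1 ∧ p.2 < p.1},
        Real.sqrt (p.1 * p.2) * (p.1 - p.2) ^ 2 /
          Real.sqrt ((1 - p.1) * (1 - p.2) * (1 - k * p.1) ^ 3 * (1 - k * p.2) ^ 3) :=
    GFAux.main_eq hk0 hk1
  have pos : 0 < ∫ p in {p : ℝ × ℝ | p.1 ∈ Set.Ioo (0:ℝ) 1 ∧ p.2 ∈ Set.Ioo (0:ℝ) 1 ∧ p.2 < p.1},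
        Real.sqrt (p.1 * p.2) * (p.1 - p.2) ^ 2 /
          Real.sqrt ((1 - p.1) * (1 - p.2) * (1 - k * p.1) ^ 3 * (1 - k * p.2) ^ 3) :=
    GFAux.pos_SS hk0 hk1
  constructor
  · linear_combination (1/2 : ℝ) * key
  · nlinarith [key, pos]
end

section
/- The function h(k) := g(k)/f(k) is strictly monotonically increasing on [0,1), where f(k) = ∫₀¹ √u/√((1-u)(1-ku)) du and g(k) = ∫₀¹ u^{3/2}/√((1-u)(1-ku)) du. -/
open MeasureTheory Set Real

noncomputable def Wf (k u : ℝ) : ℝ := 1 / Real.sqrt ((1 - u) * (1 - k * u))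

lemma denom_pos {k u : ℝ} (hk0 : 0 ≤ k) (hk1 : k < 1) (hu0 : 0 < u) (hu1 : u < 1) :
    0 < (1 - u) * (1 - k * u) := by
  have : k * u < 1 := by nlinarith
  apply mul_pos <;> linarith

lemma Wf_pos {k u : ℝ} (hk0 : 0 ≤ k) (hk1 : k < 1) (hu0 : 0 < u) (hu1 : u < 1) :
    0 < Wf k u := by
  have := denom_pos hk0 hk1 hu0 hu1
  unfold Wf
  positivity

lemma base_integrable : IntegrableOn (fun u : ℝ => (1 - u) ^ (-(1:ℝ)/2)) (Ioo 0 1) := by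
  have h : IntervalIntegrable (fun x : ℝ => x ^ (-(1:ℝ)/2)) volume 0 1 :=
    intervalIntegral.intervalIntegrable_rpow' (by norm_num)
  have h2 := h.comp_sub_left 1
  simp only [sub_zero, sub_self] at h2
  have h3 := (h2.symm)
  rw [intervalIntegrable_iff_integrableOn_Ioc_of_le (by norm_num)] at h3
  exact h3.mono_set Ioo_subset_Ioc_self

lemma integrableOn_mul_Wf {k : ℝ} (hk0 : 0 ≤ k) (hk1 : k < 1) {φ : ℝ → ℝ}
    (hφ : Measurable φ) (hφb : ∀ u ∈ Ioo (0:ℝ) 1, |φ u| ≤ 1) :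
    IntegrableOn (fun u => φ u * Wf k u) (Ioo (0:ℝ) 1) := by
  have hmeas : AEStronglyMeasurable (fun u => φ u * Wf k u)
      (volume.restrict (Ioo (0:ℝ) 1)) := by
    apply Measurable.aestronglyMeasurable
    unfold Wf
    fun_prop
  have hC : (0:ℝ) < 1 - k := by linarith
  apply Integrable.mono' (g := fun u => (1/Real.sqrt (1-k)) * (1 - u) ^ (-(1:ℝ)/2))
    (base_integrable.const_mul _) hmeas
  rw [ae_restrict_iff' measurableSet_Ioo]
  refine ae_of_all _ fun u hu => ?_
  obtain ⟨hu0, hu1⟩ := hu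
  have h1u : (0:ℝ) < 1 - u := by linarith
  have hW : Wf k u ≤ 1/Real.sqrt (1-k) * (1-u) ^ (-(1:ℝ)/2) := by
    have hrw : (1-u) ^ (-(1:ℝ)/2) = 1 / Real.sqrt (1-u) := by
      rw [show (-(1:ℝ)/2) = -(1/2) by norm_num, Real.rpow_neg h1u.le, ← Real.sqrt_eq_rpow,
        one_div]
    rw [hrw]
    unfold Wf
    rw [div_mul_div_comm, one_mul]
    apply div_le_div_of_nonneg_left one_pos.le (by positivity)
    rw [← Real.sqrt_mul hC.le]
    apply Real.sqrt_le_sqrt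
    nlinarith [mul_nonneg (mul_nonneg hk0 h1u.le) h1u.le]
  have hWpos := Wf_pos hk0 hk1 hu0 hu1
  calc ‖φ u * Wf k u‖ = |φ u| * |Wf k u| := by rw [norm_mul]; rfl
    _ ≤ 1 * Wf k u := by
        rw [abs_of_pos hWpos]
        exact mul_le_mul_of_nonneg_right (hφb u ⟨hu0, hu1⟩) hWpos.le
    _ ≤ _ := by rw [one_mul]; exact hW

lemma integral_pos {φ : ℝ → ℝ} (hint : IntegrableOn φ (Ioo (0:ℝ) 1))
    (hpos : ∀ u ∈ Ioo (0:ℝ) 1, 0 < φ u) :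
    0 < ∫ u in Ioo (0:ℝ) 1, φ u := by
  have hae : 0 ≤ᶠ[ae (volume.restrict (Ioo (0:ℝ) 1))] φ :=
    (ae_restrict_iff' measurableSet_Ioo).mpr (ae_of_all _ fun u hu => (hpos u hu).le)
  rw [setIntegral_pos_iff_support_of_nonneg_ae hae hint]
  have hsub : Ioo (0:ℝ) 1 ⊆ Function.support φ ∩ Ioo 0 1 :=
    fun u hu => ⟨ne_of_gt (hpos u hu), hu⟩
  have h1 : (0:ENNReal) < volume (Ioo (0:ℝ) 1) := by rw [Real.volume_Ioo]; norm_num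
  exact lt_of_lt_of_le h1 (measure_mono hsub)

lemma int_sqrtW {k : ℝ} (hk0 : 0 ≤ k) (hk1 : k < 1) :
    IntegrableOn (fun u => Real.sqrt u * Wf k u) (Ioo (0:ℝ) 1) := by
  apply integrableOn_mul_Wf hk0 hk1 Real.continuous_sqrt.measurable
  intro u hu
  rw [abs_of_nonneg (Real.sqrt_nonneg u)]
  exact Real.sqrt_le_one.mpr hu.2.le

lemma int_sqrtMulW {k : ℝ} (hk0 : 0 ≤ k) (hk1 : k < 1) :
    IntegrableOn (fun u => Real.sqrt u * u * Wf k u) (Ioo (0:ℝ) 1) := by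
  apply integrableOn_mul_Wf (φ := fun u => Real.sqrt u * u) hk0 hk1 (by fun_prop)
  intro u hu
  rw [abs_of_nonneg (mul_nonneg (Real.sqrt_nonneg u) hu.1.le)]
  calc Real.sqrt u * u ≤ 1 * 1 :=
    mul_le_mul (Real.sqrt_le_one.mpr hu.2.le) hu.2.le hu.1.le one_pos.le
  _ = 1 := by ring

lemma F_eq (k : ℝ) :
    (∫ u in Ioo (0:ℝ) 1, Real.sqrt u / Real.sqrt ((1 - u) * (1 - k * u))) =
    ∫ u in Ioo (0:ℝ) 1, Real.sqrt u * Wf k u := by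
  apply setIntegral_congr_fun measurableSet_Ioo
  intro u _
  unfold Wf
  simp only [mul_one_div]

lemma G_eq (k : ℝ) :
    (∫ u in Ioo (0:ℝ) 1, u ^ ((3:ℝ)/2) / Real.sqrt ((1 - u) * (1 - k * u))) =
    ∫ u in Ioo (0:ℝ) 1, Real.sqrt u * u * Wf k u := by
  apply setIntegral_congr_fun measurableSet_Ioo
  intro u hu
  unfold Wf
  have h32 : u ^ ((3:ℝ)/2) = Real.sqrt u * u := by
    rw [show (3:ℝ)/2 = 1/2 + 1 by norm_num, Real.rpow_add hu.1, Real.rpow_one,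
      ← Real.sqrt_eq_rpow]
  simp only [mul_one_div, h32]

lemma key_sign {k1 k2 c u : ℝ} (hk10 : 0 ≤ k1) (hk12 : k1 < k2) (hk21 : k2 < 1)
    (hc0 : 0 < c) (hc1 : c < 1) (hu0 : 0 < u) (hu1 : u < 1) (hne : u ≠ c) :
    Real.sqrt u * ((u - c) *
      (Wf k1 u - Real.sqrt (1 - k2*c) / Real.sqrt (1 - k1*c) * Wf k2 u)) < 0 := by
  have hk20 : 0 ≤ k2 := le_trans hk10 hk12.le
  have hE : (0:ℝ) < 1 - u := by linarith
  have hA1 : (0:ℝ) < 1 - k1 * u := by nlinarith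
  have hA2 : (0:ℝ) < 1 - k2 * u := by nlinarith
  have hB1 : (0:ℝ) < 1 - k1 * c := by nlinarith
  have hB2 : (0:ℝ) < 1 - k2 * c := by nlinarith
  have hsE : (0:ℝ) < Real.sqrt (1 - u) := Real.sqrt_pos.mpr hE
  have hsA1 : (0:ℝ) < Real.sqrt (1 - k1 * u) := Real.sqrt_pos.mpr hA1
  have hsA2 : (0:ℝ) < Real.sqrt (1 - k2 * u) := Real.sqrt_pos.mpr hA2
  have hsB1 : (0:ℝ) < Real.sqrt (1 - k1 * c) := Real.sqrt_pos.mpr hB1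
  have hsB2 : (0:ℝ) < Real.sqrt (1 - k2 * c) := Real.sqrt_pos.mpr hB2
  have hsu : (0:ℝ) < Real.sqrt u := Real.sqrt_pos.mpr hu0
  have hW1 : Wf k1 u = 1 / (Real.sqrt (1 - u) * Real.sqrt (1 - k1 * u)) := by
    unfold Wf; rw [Real.sqrt_mul hE.le]
  have hW2 : Wf k2 u = 1 / (Real.sqrt (1 - u) * Real.sqrt (1 - k2 * u)) := by
    unfold Wf; rw [Real.sqrt_mul hE.le]
  rcases lt_or_gt_of_ne hne with h | h
  · -- u < c : third factor positive, (u-c) negative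
    have key : Real.sqrt (1 - k2*c) * Real.sqrt (1 - k1*u)
        < Real.sqrt (1 - k2*u) * Real.sqrt (1 - k1*c) := by
      rw [← Real.sqrt_mul hB2.le, ← Real.sqrt_mul hA2.le]
      exact Real.sqrt_lt_sqrt (by positivity) (by nlinarith)
    have hthird : 0 < Wf k1 u - Real.sqrt (1 - k2*c) / Real.sqrt (1 - k1*c) * Wf k2 u := by
      rw [hW1, hW2, sub_pos, div_mul_div_comm, mul_one, div_lt_div_iff₀ (by positivity) (by positivity)]
      nlinarith [mul_lt_mul_of_pos_right key hsE]
    exact mul_neg_of_pos_of_neg hsu (mul_neg_of_neg_of_pos (by linarith) hthird)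
  · -- c < u : third factor negative, (u-c) positive
    have key : Real.sqrt (1 - k2*u) * Real.sqrt (1 - k1*c)
        < Real.sqrt (1 - k2*c) * Real.sqrt (1 - k1*u) := by
      rw [← Real.sqrt_mul hB2.le, ← Real.sqrt_mul hA2.le]
      exact Real.sqrt_lt_sqrt (by positivity) (by nlinarith)
    have hthird : Wf k1 u - Real.sqrt (1 - k2*c) / Real.sqrt (1 - k1*c) * Wf k2 u < 0 := by
      rw [hW1, hW2, sub_neg, div_mul_div_comm, mul_one, div_lt_div_iff₀ (by positivity) (by positivity)]
      nlinarith [mul_lt_mul_of_pos_right key hsE]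
    exact mul_neg_of_pos_of_neg hsu (mul_neg_of_pos_of_neg (by linarith) hthird)

lemma integral_pos' {φ : ℝ → ℝ} (c : ℝ) (hint : IntegrableOn φ (Ioo (0:ℝ) 1))
    (hnn : ∀ u ∈ Ioo (0:ℝ) 1, 0 ≤ φ u)
    (hpos : ∀ u ∈ Ioo (0:ℝ) 1, u ≠ c → 0 < φ u) :
    0 < ∫ u in Ioo (0:ℝ) 1, φ u := by
  have hae : 0 ≤ᶠ[ae (volume.restrict (Ioo (0:ℝ) 1))] φ :=
    (ae_restrict_iff' measurableSet_Ioo).mpr (ae_of_all _ fun u hu => hnn u hu)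
  rw [setIntegral_pos_iff_support_of_nonneg_ae hae hint]
  have hsub : Ioo (0:ℝ) 1 \ {c} ⊆ Function.support φ ∩ Ioo 0 1 :=
    fun u hu => ⟨ne_of_gt (hpos u hu.1 hu.2), hu.1⟩
  have h1 : (0:ENNReal) < volume (Ioo (0:ℝ) 1 \ {c}) := by
    rw [measure_diff_null (measure_singleton c), Real.volume_Ioo]
    norm_num
  exact lt_of_lt_of_le h1 (measure_mono hsub)

/-- The function h(k) = g(k)/f(k) is strictly monotonically
increasing on [0,1). -/
theorem h_strictMonoOn :
    StrictMonoOn (fun k : ℝ =>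
      (∫ u in Set.Ioo (0:ℝ) 1, u ^ ((3:ℝ)/2) / Real.sqrt ((1 - u) * (1 - k * u))) /
      (∫ u in Set.Ioo (0:ℝ) 1, Real.sqrt u / Real.sqrt ((1 - u) * (1 - k * u))))
      (Set.Ico (0:ℝ) 1) := by
  intro k1 hk1 k2 hk2 h12
  obtain ⟨hk10, hk11⟩ := hk1
  obtain ⟨hk20, hk21⟩ := hk2
  show (∫ u in Ioo (0:ℝ) 1, u ^ ((3:ℝ)/2) / Real.sqrt ((1 - u) * (1 - k1 * u))) /
      (∫ u in Ioo (0:ℝ) 1, Real.sqrt u / Real.sqrt ((1 - u) * (1 - k1 * u))) <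
      (∫ u in Ioo (0:ℝ) 1, u ^ ((3:ℝ)/2) / Real.sqrt ((1 - u) * (1 - k2 * u))) /
      (∫ u in Ioo (0:ℝ) 1, Real.sqrt u / Real.sqrt ((1 - u) * (1 - k2 * u)))
  rw [F_eq, F_eq, G_eq, G_eq]
  set F1 := ∫ u in Ioo (0:ℝ) 1, Real.sqrt u * Wf k1 u with hF1def
  set F2 := ∫ u in Ioo (0:ℝ) 1, Real.sqrt u * Wf k2 u with hF2def
  set G1 := ∫ u in Ioo (0:ℝ) 1, Real.sqrt u * u * Wf k1 u with hG1def
  set G2 := ∫ u in Ioo (0:ℝ) 1, Real.sqrt u * u * Wf k2 u with hG2def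
  have hF1pos : 0 < F1 := integral_pos (int_sqrtW hk10 hk11)
    (fun u hu => mul_pos (Real.sqrt_pos.mpr hu.1) (Wf_pos hk10 hk11 hu.1 hu.2))
  have hF2pos : 0 < F2 := integral_pos (int_sqrtW hk20 hk21)
    (fun u hu => mul_pos (Real.sqrt_pos.mpr hu.1) (Wf_pos hk20 hk21 hu.1 hu.2))
  have hG2pos : 0 < G2 := integral_pos (int_sqrtMulW hk20 hk21)
    (fun u hu => mul_pos (mul_pos (Real.sqrt_pos.mpr hu.1) hu.1) (Wf_pos hk20 hk21 hu.1 hu.2))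
  have hGF : G2 < F2 := by
    have hsub : 0 < ∫ u in Ioo (0:ℝ) 1,
        (Real.sqrt u * Wf k2 u - Real.sqrt u * u * Wf k2 u) := by
      apply integral_pos ((int_sqrtW hk20 hk21).sub (int_sqrtMulW hk20 hk21))
      intro u hu
      simp only [Pi.sub_apply]
      have hW := Wf_pos hk20 hk21 hu.1 hu.2
      have hsu := Real.sqrt_pos.mpr hu.1
      nlinarith [mul_pos (mul_pos hsu hW) (sub_pos.mpr hu.2)]
    rw [integral_sub (int_sqrtW hk20 hk21) (int_sqrtMulW hk20 hk21)] at hsub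
    linarith
  set c := G2 / F2 with hcdef
  have hc0 : 0 < c := div_pos hG2pos hF2pos
  have hc1 : c < 1 := (div_lt_one hF2pos).mpr hGF
  set ρ := Real.sqrt (1 - k2 * c) / Real.sqrt (1 - k1 * c) with hρdef
  set q : ℝ → ℝ := fun u =>
    Real.sqrt u * ((u - c) * (Wf k1 u - ρ * Wf k2 u)) with hqdef
  have hint1 : IntegrableOn (fun u =>
      Real.sqrt u * u * Wf k1 u - c * (Real.sqrt u * Wf k1 u)) (Ioo (0:ℝ) 1) :=
    (int_sqrtMulW hk10 hk11).sub ((int_sqrtW hk10 hk11).const_mul c)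
  have hint2 : IntegrableOn (fun u =>
      ρ * (Real.sqrt u * u * Wf k2 u) - (ρ * c) * (Real.sqrt u * Wf k2 u)) (Ioo (0:ℝ) 1) :=
    ((int_sqrtMulW hk20 hk21).const_mul ρ).sub ((int_sqrtW hk20 hk21).const_mul (ρ * c))
  have hbase : IntegrableOn (fun u =>
      (Real.sqrt u * u * Wf k1 u - c * (Real.sqrt u * Wf k1 u)) -
      (ρ * (Real.sqrt u * u * Wf k2 u) - (ρ * c) * (Real.sqrt u * Wf k2 u)))
      (Ioo (0:ℝ) 1) := hint1.sub hint2
  have hqint : IntegrableOn q (Ioo (0:ℝ) 1) :=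
    hbase.congr_fun (fun u _ => by rw [hqdef]; ring) measurableSet_Ioo
  have hIq : (∫ u in Ioo (0:ℝ) 1, q u) = (G1 - c * F1) - ρ * (G2 - c * F2) := by
    have h1 : (∫ u in Ioo (0:ℝ) 1, q u) = ∫ u in Ioo (0:ℝ) 1,
        ((Real.sqrt u * u * Wf k1 u - c * (Real.sqrt u * Wf k1 u)) -
        (ρ * (Real.sqrt u * u * Wf k2 u) - (ρ * c) * (Real.sqrt u * Wf k2 u))) :=
      setIntegral_congr_fun measurableSet_Ioo (fun u _ => by rw [hqdef]; ring)
    rw [h1, integral_sub hint1 hint2,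
      integral_sub (int_sqrtMulW hk10 hk11) ((int_sqrtW hk10 hk11).const_mul c),
      integral_sub ((int_sqrtMulW hk20 hk21).const_mul ρ) ((int_sqrtW hk20 hk21).const_mul (ρ * c)),
      integral_const_mul, integral_const_mul, integral_const_mul]
    rw [← hF1def, ← hF2def, ← hG1def, ← hG2def]
    ring
  have hqneg : (∫ u in Ioo (0:ℝ) 1, q u) < 0 := by
    have hpos : 0 < ∫ u in Ioo (0:ℝ) 1, -q u := by
      apply integral_pos' c hqint.neg
      · intro u hu
        rcases eq_or_ne u c with rfl | hne
        · simp [hqdef]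
        · exact (neg_pos.mpr (key_sign hk10 h12 hk21 hc0 hc1 hu.1 hu.2 hne)).le
      · intro u hu hne
        exact neg_pos.mpr (key_sign hk10 h12 hk21 hc0 hc1 hu.1 hu.2 hne)
    rw [integral_neg] at hpos
    linarith
  have hzero : G2 - c * F2 = 0 := by
    rw [hcdef]
    field_simp
    ring
  rw [hIq, hzero, mul_zero, sub_zero, sub_neg] at hqneg
  rw [hcdef, div_lt_div_iff₀ hF1pos hF2pos]
  calc G1 * F2 < (c * F1) * F2 := mul_lt_mul_of_pos_right hqneg hF2pos
    _ = G2 * F1 := by rw [hcdef]; field_simp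
end

section
/- The limit of h(k) = g(k)/f(k) as k tends to 1 from below equals 1, where f(k) = ∫₀¹ √u/√((1-u)(1-ku)) du and g(k) = ∫₀¹ u^{3/2}/√((1-u)(1-ku)) du. -/
open MeasureTheory Set Real Filter Topology

private lemma intOneSub : IntegrableOn (fun u : ℝ => ((1 - u) ^ (-(1/2) : ℝ))) (Ioo 0 1) := by
  have h := ((intervalIntegral.intervalIntegrable_rpow' (a := 0) (b := 1) (r := -(1/2))
    (by norm_num)).comp_sub_left 1).symm
  norm_num at h
  rw [intervalIntegrable_iff_integrableOn_Ioc_of_le (by norm_num)] at h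
  exact h.mono_set Ioo_subset_Ioc_self

private lemma intOneSub' : IntegrableOn (fun u : ℝ => (Real.sqrt (1 - u))⁻¹) (Ioo 0 1) := by
  apply intOneSub.congr_fun ?_ measurableSet_Ioo
  intro u hu
  dsimp only
  rw [Real.rpow_neg (by linarith [hu.2] : (0:ℝ) ≤ 1 - u), ← Real.sqrt_eq_rpow]

private lemma integrableAux {k : ℝ} (hk0 : 0 ≤ k) (hk1 : k < 1) {c : ℝ → ℝ}
    (hm : Measurable c) (hc0 : ∀ u ∈ Ioo (0:ℝ) 1, 0 ≤ c u)
    (hc1 : ∀ u ∈ Ioo (0:ℝ) 1, c u ≤ 1) :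
    IntegrableOn (fun u => c u / Real.sqrt ((1 - u) * (1 - k * u))) (Ioo 0 1) := by
  have hbig : IntegrableOn (fun u : ℝ => (Real.sqrt (1 - k))⁻¹ * (Real.sqrt (1 - u))⁻¹)
      (Ioo 0 1) := intOneSub'.const_mul _
  apply Integrable.mono' hbig
  · have : Measurable fun u : ℝ => Real.sqrt ((1 - u) * (1 - k * u)) :=
      Real.continuous_sqrt.measurable.comp
        ((measurable_const.sub measurable_id).mul
          (measurable_const.sub (measurable_const.mul measurable_id)))
    exact (hm.div this).aestronglyMeasurable
  · rw [ae_restrict_iff' measurableSet_Ioo]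
    filter_upwards with u hu
    have h1u : (0:ℝ) < 1 - u := by linarith [hu.2]
    have hku : (0:ℝ) < 1 - k * u := by nlinarith [hu.1, hu.2]
    have hkk : (1:ℝ) - k ≤ 1 - k * u := by nlinarith [hu.2]
    have hD : (0:ℝ) < Real.sqrt ((1 - u) * (1 - k)) := Real.sqrt_pos.2 (by nlinarith)
    rw [Real.norm_eq_abs, abs_of_nonneg (div_nonneg (hc0 u hu) (Real.sqrt_nonneg _))]
    calc c u / Real.sqrt ((1 - u) * (1 - k * u))
        ≤ 1 / Real.sqrt ((1 - u) * (1 - k)) := by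
          apply div_le_div₀ zero_le_one (hc1 u hu) hD
          exact Real.sqrt_le_sqrt (by nlinarith)
      _ = (Real.sqrt (1 - k))⁻¹ * (Real.sqrt (1 - u))⁻¹ := by
          rw [Real.sqrt_mul h1u.le, one_div, mul_inv, mul_comm]

private lemma intF {k : ℝ} (hk0 : 0 ≤ k) (hk1 : k < 1) :
    IntegrableOn (fun u => Real.sqrt u / Real.sqrt ((1 - u) * (1 - k * u))) (Ioo 0 1) :=
  integrableAux hk0 hk1 Real.continuous_sqrt.measurable
    (fun u _ => Real.sqrt_nonneg u) (fun u hu => Real.sqrt_le_one.2 hu.2.le)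

private lemma intG {k : ℝ} (hk0 : 0 ≤ k) (hk1 : k < 1) :
    IntegrableOn (fun u => u ^ ((3:ℝ)/2) / Real.sqrt ((1 - u) * (1 - k * u))) (Ioo 0 1) := by
  apply integrableAux hk0 hk1 (measurable_id.pow_const _)
  · intro u hu; exact Real.rpow_nonneg hu.1.le _
  · intro u hu
    exact Real.rpow_le_one hu.1.le hu.2.le (by norm_num)

private lemma rpow32 {u : ℝ} (hu : 0 < u) : u ^ ((3:ℝ)/2) = u * Real.sqrt u := by
  rw [Real.sqrt_eq_rpow, show (3:ℝ)/2 = 1 + 1/2 by norm_num, Real.rpow_add hu, Real.rpow_one]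

private lemma G_le_F {k : ℝ} (hk0 : 0 ≤ k) (hk1 : k < 1) :
    (∫ u in Ioo (0:ℝ) 1, u ^ ((3:ℝ)/2) / Real.sqrt ((1 - u) * (1 - k * u))) ≤
    ∫ u in Ioo (0:ℝ) 1, Real.sqrt u / Real.sqrt ((1 - u) * (1 - k * u)) := by
  apply setIntegral_mono_on (intG hk0 hk1) (intF hk0 hk1) measurableSet_Ioo
  intro u hu
  have h := Real.sqrt_nonneg u
  apply div_le_div_of_nonneg_right _ (Real.sqrt_nonneg _)
  rw [rpow32 hu.1]
  nlinarith [hu.2]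

private lemma F_le_G_add_one {k : ℝ} (hk0 : 0 ≤ k) (hk1 : k < 1) :
    (∫ u in Ioo (0:ℝ) 1, Real.sqrt u / Real.sqrt ((1 - u) * (1 - k * u))) ≤
    (∫ u in Ioo (0:ℝ) 1, u ^ ((3:ℝ)/2) / Real.sqrt ((1 - u) * (1 - k * u))) + 1 := by
  rw [← sub_le_iff_le_add', ← integral_sub (intF hk0 hk1) (intG hk0 hk1)]
  have h1 : (∫ u in Ioo (0:ℝ) 1, (1:ℝ)) = 1 := by
    simp [Real.volume_Ioo]
  refine le_trans (setIntegral_mono_on (((intF hk0 hk1).sub (intG hk0 hk1)))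
    (integrableOn_const measure_Ioo_lt_top.ne) measurableSet_Ioo ?_) (le_of_eq h1)
  intro u hu

  have h1u : (0:ℝ) < 1 - u := by linarith [hu.2]
  have hku : (0:ℝ) < 1 - k * u := by nlinarith [hu.1, hu.2]
  have hD : (0:ℝ) < Real.sqrt ((1 - u) * (1 - k * u)) := Real.sqrt_pos.2 (by nlinarith)
  rw [div_sub_div_same, div_le_one hD]
  have hs1 : Real.sqrt u ≤ 1 := Real.sqrt_le_one.2 hu.2.le
  have hs0 : 0 ≤ Real.sqrt u := Real.sqrt_nonneg u
  have key : Real.sqrt u - u ^ ((3:ℝ)/2) = Real.sqrt u * (1 - u) := by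
    rw [rpow32 hu.1]; ring
  rw [key]
  calc Real.sqrt u * (1 - u) ≤ 1 - u := by nlinarith
    _ = Real.sqrt ((1 - u) * (1 - u)) := (Real.sqrt_mul_self h1u.le).symm
    _ ≤ Real.sqrt ((1 - u) * (1 - k * u)) := Real.sqrt_le_sqrt (by nlinarith [mul_nonneg h1u.le (mul_nonneg (sub_nonneg.2 hk1.le) hu.1.le)])

private lemma F_ge {k : ℝ} (hk : k ∈ Ioo (1/2 : ℝ) 1) :
    (Real.sqrt 2)⁻¹ * Real.log ((3/2 - k) / (1 - k)) ≤
    ∫ u in Ioo (0:ℝ) 1, Real.sqrt u / Real.sqrt ((1 - u) * (1 - k * u)) := by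
  have hk0 : (0:ℝ) ≤ k := by linarith [hk.1]
  have hk1 : k < 1 := hk.2
  have h1k : (0:ℝ) < 1 - k := by linarith
  -- step 1: explicit value of the comparison integral
  have h1 : (∫ u in Ioo ((1:ℝ)/2) 1, (Real.sqrt 2)⁻¹ * (2 - k - u)⁻¹)
      = (Real.sqrt 2)⁻¹ * Real.log ((3/2 - k) / (1 - k)) := by
    rw [← integral_Ioc_eq_integral_Ioo, ← intervalIntegral.integral_of_le (by norm_num : (1:ℝ)/2 ≤ 1),
      intervalIntegral.integral_const_mul]
    congr 1
    have := intervalIntegral.integral_comp_sub_left (a := (1:ℝ)/2) (b := 1)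
      (fun x : ℝ => x⁻¹) (2 - k)
    simp only [show (2:ℝ) - k - 1 = 1 - k by ring, show (2:ℝ) - k - 1/2 = 3/2 - k by ring] at this
    rw [show (fun u : ℝ => (2 - k - u)⁻¹) = fun u : ℝ => ((2 - k) - u)⁻¹ by ring_nf] at *
    rw [this, integral_inv_of_pos h1k (by linarith)]
  -- step 2: comparison on Ioo (1/2) 1
  have h2 : (∫ u in Ioo ((1:ℝ)/2) 1, (Real.sqrt 2)⁻¹ * (2 - k - u)⁻¹)
      ≤ ∫ u in Ioo ((1:ℝ)/2) 1, Real.sqrt u / Real.sqrt ((1 - u) * (1 - k * u)) := by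
    have hcont : ContinuousOn (fun u : ℝ => (Real.sqrt 2)⁻¹ * (2 - k - u)⁻¹) (Icc (1/2) 1) := by
      apply ContinuousOn.mul continuousOn_const
      apply ContinuousOn.inv₀ (by fun_prop)
      intro u hu
      have := hu.2
      intro h; nlinarith
    apply setIntegral_mono_on (hcont.integrableOn_Icc.mono_set Ioo_subset_Icc_self)
      ((intF hk0 hk1).mono_set (Ioo_subset_Ioo (by norm_num) le_rfl)) measurableSet_Ioo
    intro u hu
    have hu2 : u < 1 := hu.2
    have hu1 : (1:ℝ)/2 < u := hu.1
    have h1u : (0:ℝ) < 1 - u := by linarith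
    have hku : (0:ℝ) < 1 - k * u := by nlinarith
    have hden : (0:ℝ) < 2 - k - u := by linarith
    have hs2 : (Real.sqrt 2)⁻¹ ≤ Real.sqrt u := by
      rw [← Real.sqrt_inv]
      exact Real.sqrt_le_sqrt (by norm_num; linarith)
    have hDle : Real.sqrt ((1 - u) * (1 - k * u)) ≤ 2 - k - u := by
      rw [show (2:ℝ) - k - u = Real.sqrt ((2 - k - u) * (2 - k - u)) from
        (Real.sqrt_mul_self (by linarith)).symm]
      apply Real.sqrt_le_sqrt
      have e1 : 1 - u ≤ 2 - k - u := by linarith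
      have e2 : 1 - k * u ≤ 2 - k - u := by nlinarith [mul_nonneg h1k.le h1u.le]
      exact mul_le_mul e1 e2 hku.le (by linarith)
    calc (Real.sqrt 2)⁻¹ * (2 - k - u)⁻¹ = (Real.sqrt 2)⁻¹ / (2 - k - u) := by
          rw [div_eq_mul_inv]
      _ ≤ Real.sqrt u / Real.sqrt ((1 - u) * (1 - k * u)) :=
          div_le_div₀ (Real.sqrt_nonneg u) hs2 (Real.sqrt_pos.2 (by positivity)) hDle
  -- step 3: enlarge the domain
  have h3 : (∫ u in Ioo ((1:ℝ)/2) 1, Real.sqrt u / Real.sqrt ((1 - u) * (1 - k * u)))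
      ≤ ∫ u in Ioo (0:ℝ) 1, Real.sqrt u / Real.sqrt ((1 - u) * (1 - k * u)) := by
    apply setIntegral_mono_set (intF hk0 hk1)
    · filter_upwards with u
      positivity
    · exact HasSubset.Subset.eventuallyLE (Ioo_subset_Ioo (by norm_num) le_rfl)
  linarith [h1 ▸ h2, h3]

private lemma phi_tendsto :
    Tendsto (fun k : ℝ => (Real.sqrt 2)⁻¹ * Real.log ((3/2 - k) / (1 - k)))
      (nhdsWithin (1:ℝ) (Iio 1)) atTop := by
  have h0 : Tendsto (fun k : ℝ => 1 - k) (nhdsWithin (1:ℝ) (Iio 1)) (nhdsWithin 0 (Ioi 0)) := by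
    apply tendsto_nhdsWithin_of_tendsto_nhds_of_eventually_within
    · have : Tendsto (fun k : ℝ => 1 - k) (nhds 1) (nhds 0) := by
        have h := ((continuous_const (y := (1:ℝ))).sub continuous_id).tendsto (1:ℝ)
        simpa [Pi.sub_def] using h
      exact this.mono_left nhdsWithin_le_nhds
    · filter_upwards [self_mem_nhdsWithin] with k hk
      exact mem_Ioi.2 (sub_pos.2 (mem_Iio.1 hk))
  have hlog : Tendsto (fun k : ℝ => -Real.log (1 - k)) (nhdsWithin (1:ℝ) (Iio 1)) atTop := by
    have := Real.tendsto_log_nhdsGT_zero.comp h0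
    exact tendsto_neg_atBot_atTop.comp this
  have hlog2 : Tendsto (fun k : ℝ => Real.log (3/2 - k)) (nhdsWithin (1:ℝ) (Iio 1))
      (nhds (Real.log (1/2))) := by
    have hc : ContinuousAt (fun k : ℝ => Real.log (3/2 - k)) 1 := by
      apply ContinuousAt.comp (g := Real.log) (f := fun k : ℝ => 3/2 - k)
      · apply Real.continuousAt_log; norm_num
      · fun_prop
    have : Tendsto (fun k : ℝ => Real.log (3/2 - k)) (nhds 1)
        (nhds (Real.log (1/2))) := by
      have h := hc.tendsto
      norm_num at h ⊢
      exact h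
    exact this.mono_left nhdsWithin_le_nhds
  have hsum : Tendsto (fun k : ℝ => Real.log (3/2 - k) - Real.log (1 - k))
      (nhdsWithin (1:ℝ) (Iio 1)) atTop := by
    simpa [sub_eq_add_neg] using hlog2.add_atTop hlog
  have heq : ∀ᶠ k in nhdsWithin (1:ℝ) (Iio 1),
      Real.log (3/2 - k) - Real.log (1 - k) = Real.log ((3/2 - k) / (1 - k)) := by
    filter_upwards [Ioo_mem_nhdsLT_of_mem (show (1:ℝ) ∈ Ioc (1/2 : ℝ) 1 by norm_num)] with k hk
    rw [Real.log_div (by nlinarith [hk.2] : (3:ℝ)/2 - k ≠ 0) (by nlinarith [hk.2] : (1:ℝ) - k ≠ 0)]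
  have := (hsum.congr' heq).const_mul_atTop
    (show (0:ℝ) < (Real.sqrt 2)⁻¹ by positivity)
  exact this

/-- h(k) = g(k)/f(k) tends to 1 as k → 1⁻. -/
theorem h_tendsto_one :
    Filter.Tendsto (fun k : ℝ =>
      (∫ u in Set.Ioo (0:ℝ) 1, u ^ ((3:ℝ)/2) / Real.sqrt ((1 - u) * (1 - k * u))) /
      (∫ u in Set.Ioo (0:ℝ) 1, Real.sqrt u / Real.sqrt ((1 - u) * (1 - k * u))))
      (nhdsWithin (1:ℝ) (Set.Iio 1)) (nhds 1) := by
  set l := nhdsWithin (1:ℝ) (Set.Iio 1)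
  set F : ℝ → ℝ := fun k => ∫ u in Set.Ioo (0:ℝ) 1, Real.sqrt u / Real.sqrt ((1 - u) * (1 - k * u))
    with hFdef
  set G : ℝ → ℝ := fun k => ∫ u in Set.Ioo (0:ℝ) 1, u ^ ((3:ℝ)/2) / Real.sqrt ((1 - u) * (1 - k * u))
    with hGdef
  have hmem : Ioo ((1:ℝ)/2) 1 ∈ l :=
    Ioo_mem_nhdsLT_of_mem (show (1:ℝ) ∈ Ioc (1/2 : ℝ) 1 by norm_num)
  have hF : Tendsto F l atTop := by
    apply tendsto_atTop_mono' l _ phi_tendsto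
    filter_upwards [hmem] with k hk
    exact F_ge hk
  have hFinv : Tendsto (fun k => (F k)⁻¹) l (nhds 0) := hF.inv_tendsto_atTop
  have hF2 : ∀ᶠ k in l, (2:ℝ) ≤ F k := hF.eventually_ge_atTop 2
  apply tendsto_of_tendsto_of_tendsto_of_le_of_le'
    (g := fun k => 1 - (F k)⁻¹) (h := fun _ => (1:ℝ))
  · simpa using tendsto_const_nhds.sub hFinv
  · exact tendsto_const_nhds
  · filter_upwards [hmem, hF2] with k hk hk2
    have hk0 : (0:ℝ) ≤ k := by linarith [hk.1]
    have hFpos : (0:ℝ) < F k := by linarith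
    have hGe : F k - 1 ≤ G k := by
      have := F_le_G_add_one hk0 hk.2
      change F k ≤ G k + 1 at this
      linarith
    calc 1 - (F k)⁻¹ = (F k - 1) / F k := by
          field_simp
      _ ≤ G k / F k := div_le_div_of_nonneg_right hGe hFpos.le
  · filter_upwards [hmem, hF2] with k hk hk2
    have hk0 : (0:ℝ) ≤ k := by linarith [hk.1]
    have hFpos : (0:ℝ) < F k := by linarith
    rw [div_le_one hFpos]
    have := G_le_F hk0 hk.2
    simpa only [← hFdef, ← hGdef] using this
end

section
/- For each r > 0, the function K_r(k) := k − 1/(2·(r·h(r²k) + h(k))²) is strictly increasing on [0, k_max), is negative at k = 0, and has a positive limit as k → k_max⁻, where k_max = min{1, 1/r²}; hence K_r has a unique zero κ(r) in (0, k_max). -/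
/-!
Since `h` is positive and increasing, `K_r(k)` is `k` minus a decreasing positive quantity, hence
strictly increasing. At `k_max` either `k_max = 1` (when `r ≤ 1`) or `r² k_max = 1` (when `r ≥ 1`),
so one of the two terms `h(k)`, `h(r²k)` tends to `1`; this makes `2(r h(r²k) + h(k))²` exceed
`1 / k_max` in the limit, so the limit of `K_r` is positive. The intermediate value theorem gives a
zero, and strict monotonicity makes it unique.
-/

open Set Filter Topology Function

theorem StrictMonoOn.existsUnique_eq_of_tendsto_nhdsLT {f : ℝ → ℝ} {a b c L : ℝ}
    (hf : StrictMonoOn f (Ico a b)) (hcont : ContinuousOn f (Ico a b)) (hab : a < b)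
    (ha : f a < c) (hL : c < L) (hb : Tendsto f (𝓝[<] b) (𝓝 L)) :
    ∃! x, x ∈ Ioo a b ∧ f x = c := by
  obtain ⟨y, hcy, hy⟩ := ((hb.eventually (eventually_gt_nhds hL)).and (Ioo_mem_nhdsLT hab)).exists
  obtain ⟨x, hx, hfx⟩ := intermediate_value_Ioo hy.1.le
    (hcont.mono (Icc_subset_Ico_right hy.2)) ⟨ha, hcy⟩
  have hx_mem : x ∈ Ioo a b := ⟨hx.1, hx.2.trans hy.2⟩
  exact ⟨x, ⟨hx_mem, hfx⟩, fun x' hx' =>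
    hf.injOn (Ioo_subset_Ico_self hx'.1) (Ioo_subset_Ico_self hx_mem) (hx'.2.trans hfx.symm)⟩

theorem strictMonoOn_sub_one_div_two_mul_sq {g : ℝ → ℝ} {s : Set ℝ}
    (hpos : ∀ x ∈ s, 0 < g x) (hg : MonotoneOn g s) :
    StrictMonoOn (fun x => x - 1 / (2 * g x ^ 2)) s := by
  intro x hx y hy hxy
  have hgx := hpos x hx
  have hinv : 1 / (2 * g y ^ 2) ≤ 1 / (2 * g x ^ 2) := by gcongr; exact hg hx hy hxy.le
  simp only
  linarith

theorem tendsto_nhdsLT_update {f : ℝ → ℝ} {a b c x : ℝ} (hf : ContinuousOn f (Ico a b))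
    (hb : Tendsto f (𝓝[<] b) (𝓝 c)) (hx : x ∈ Ioc a b) :
    Tendsto f (𝓝[<] x) (𝓝 (update f b c x)) := by
  rcases hx.2.eq_or_lt with rfl | hxb
  · rwa [update_self]
  · rw [update_of_ne hxb.ne, ← nhdsWithin_Ico_eq_nhdsLT hx.1]
    exact (hf x ⟨hx.1.le, hxb⟩).mono (Ico_subset_Ico_right hxb.le)

noncomputable def kmax (r : ℝ) : ℝ := min 1 (1 / r ^ 2)

noncomputable def Kr (h : ℝ → ℝ) (r k : ℝ) : ℝ := k - 1 / (2 * (r * h (r ^ 2 * k) + h k) ^ 2)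

section

variable {h : ℝ → ℝ} {r : ℝ}

theorem kmax_pos (hr : 0 < r) : 0 < kmax r := lt_min one_pos (by positivity)

theorem sq_mul_kmax (hr : 0 < r) : r ^ 2 * kmax r = min (r ^ 2) 1 := by
  rw [kmax, mul_min_of_nonneg _ _ (by positivity), mul_one, mul_one_div_cancel (by positivity)]

theorem mem_Ico_of_mem_Ico_kmax (hr : 0 < r) {k : ℝ} (hk : k ∈ Ico 0 (kmax r)) :
    k ∈ Ico 0 1 ∧ r ^ 2 * k ∈ Ico 0 1 := by
  have hr2 : 0 < r ^ 2 := by positivity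
  refine ⟨⟨hk.1, hk.2.trans_le (min_le_left _ _)⟩, mul_nonneg hr2.le hk.1, ?_⟩
  calc r ^ 2 * k < r ^ 2 * kmax r := by gcongr; exact hk.2
    _ ≤ 1 := (sq_mul_kmax hr).trans_le (min_le_right _ _)

theorem mem_Ioc_kmax (hr : 0 < r) : kmax r ∈ Ioc 0 1 ∧ r ^ 2 * kmax r ∈ Ioc 0 1 :=
  ⟨⟨kmax_pos hr, min_le_left _ _⟩,
    ⟨mul_pos (by positivity) (kmax_pos hr), (sq_mul_kmax hr).trans_le (min_le_right _ _)⟩⟩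

theorem update_one_pos (hpos : ∀ k ∈ Ico (0 : ℝ) 1, 0 < h k) {k : ℝ} (hk : k ∈ Ioc 0 1) :
    0 < update h 1 1 k := by
  rcases hk.2.eq_or_lt with rfl | hk1
  · simp
  · rw [update_of_ne hk1.ne]
    exact hpos k ⟨hk.1.le, hk1⟩

theorem Kr_zero_neg (hr : 0 ≤ r) (h0 : 0 < h 0) : Kr h r 0 < 0 := by
  simp only [Kr, mul_zero, zero_sub, neg_lt_zero]
  positivity

theorem strictMonoOn_Kr (hmono : StrictMonoOn h (Ico 0 1)) (hpos : ∀ k ∈ Ico (0 : ℝ) 1, 0 < h k)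
    (hr : 0 < r) : StrictMonoOn (Kr h r) (Ico 0 (kmax r)) := by
  refine strictMonoOn_sub_one_div_two_mul_sq (g := fun k => r * h (r ^ 2 * k) + h k)
    (fun k hk => ?_) (fun x hx y hy hxy => ?_)
  · have hk' := mem_Ico_of_mem_Ico_kmax hr hk
    have hk_pos := hpos _ hk'.1
    have hsq_pos := hpos _ hk'.2
    positivity
  · have hx' := mem_Ico_of_mem_Ico_kmax hr hx
    have hy' := mem_Ico_of_mem_Ico_kmax hr hy
    have h1 := hmono.monotoneOn hx'.2 hy'.2 (by gcongr)
    have h2 := hmono.monotoneOn hx'.1 hy'.1 hxy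
    dsimp only
    gcongr

theorem continuousOn_Kr (hc : ContinuousOn h (Ico 0 1)) (hpos : ∀ k ∈ Ico (0 : ℝ) 1, 0 < h k)
    (hr : 0 < r) : ContinuousOn (Kr h r) (Ico 0 (kmax r)) := by
  have hmaps : MapsTo (r ^ 2 * ·) (Ico 0 (kmax r)) (Ico 0 1) := fun k hk =>
    (mem_Ico_of_mem_Ico_kmax hr hk).2
  refine continuousOn_id.sub (continuousOn_const.div (continuousOn_const.mul
    (((continuousOn_const.mul (hc.comp (by fun_prop) hmaps)).add
      (hc.mono fun k hk => (mem_Ico_of_mem_Ico_kmax hr hk).1)).pow 2)) fun k hk => ?_)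
  have hk' := mem_Ico_of_mem_Ico_kmax hr hk
  have hk_pos := hpos _ hk'.1
  have hsq_pos := hpos _ hk'.2
  positivity

/-- `update h 1 1` is the continuous extension of `h` to `[0, 1]`. -/
theorem tendsto_Kr_kmax (hc : ContinuousOn h (Ico 0 1)) (hpos : ∀ k ∈ Ico (0 : ℝ) 1, 0 < h k)
    (hlim : Tendsto h (𝓝[<] 1) (𝓝 1)) (hr : 0 < r) :
    Tendsto (Kr h r) (𝓝[<] kmax r) (𝓝 (Kr (update h 1 1) r (kmax r))) := by
  have hr2 : 0 < r ^ 2 := by positivity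
  have hscale : Tendsto (r ^ 2 * ·) (𝓝[<] kmax r) (𝓝[<] (r ^ 2 * kmax r)) :=
    (continuous_const_mul _).continuousWithinAt.tendsto_nhdsWithin fun k hk =>
      mul_lt_mul_of_pos_left hk hr2
  have hinner := ((tendsto_nhdsLT_update hc hlim (mem_Ioc_kmax hr).2).comp hscale)
  have houter := tendsto_nhdsLT_update hc hlim (mem_Ioc_kmax hr).1
  have hkmax_pos := update_one_pos hpos (mem_Ioc_kmax hr).1
  have hsq_pos := update_one_pos hpos (mem_Ioc_kmax hr).2
  exact (tendsto_id.mono_left nhdsWithin_le_nhds).sub (tendsto_const_nhds.div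
    ((((hinner.const_mul r).add houter).pow 2).const_mul 2) (by positivity))

theorem Kr_kmax_pos {H : ℝ → ℝ} (hH : ∀ k ∈ Ioc (0 : ℝ) 1, 0 < H k) (hH1 : H 1 = 1)
    (hr : 0 < r) : 0 < Kr H r (kmax r) := by
  have hr2 : 0 < r ^ 2 := by positivity
  have hH_kmax := hH _ (mem_Ioc_kmax hr).1
  have hH_sq := hH _ (mem_Ioc_kmax hr).2
  rw [Kr, sub_pos]
  rcases le_total r 1 with hr1 | hr1
  · have hk : kmax r = 1 := min_eq_left (by rw [le_div_iff₀ hr2]; nlinarith)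
    rw [hk] at hH_sq ⊢
    rw [hH1, div_lt_one (by positivity)]
    nlinarith [mul_pos hr hH_sq]
  · have hk : kmax r = 1 / r ^ 2 := min_eq_right (by rw [div_le_one hr2]; nlinarith)
    have hk' : r ^ 2 * kmax r = 1 := by rw [hk, mul_one_div_cancel hr2.ne']
    rw [hk', hH1]
    rw [hk] at hH_kmax ⊢
    exact one_div_lt_one_div_of_lt hr2 (by nlinarith)

end

theorem K_r_unique_zero_general (h : ℝ → ℝ)
    (hc : ContinuousOn h (Set.Ico (0:ℝ) 1))
    (hmono : StrictMonoOn h (Set.Ico (0:ℝ) 1))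
    (hpos : ∀ k ∈ Set.Ico (0:ℝ) 1, 0 < h k)
    (hlim : Filter.Tendsto h (nhdsWithin (1:ℝ) (Set.Iio 1)) (nhds 1))
    (r : ℝ) (hr : 0 < r) :
    StrictMonoOn (fun k : ℝ => k - 1 / (2 * (r * h (r ^ 2 * k) + h k) ^ 2))
        (Set.Ico (0:ℝ) (min 1 (1 / r ^ 2))) ∧
    (0:ℝ) - 1 / (2 * (r * h (r ^ 2 * 0) + h 0) ^ 2) < 0 ∧
    (∃ L > (0:ℝ), Filter.Tendsto (fun k : ℝ => k - 1 / (2 * (r * h (r ^ 2 * k) + h k) ^ 2))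
        (nhdsWithin (min 1 (1 / r ^ 2)) (Set.Iio (min 1 (1 / r ^ 2)))) (nhds L)) ∧
    ∃! κ : ℝ, κ ∈ Set.Ioo (0:ℝ) (min 1 (1 / r ^ 2)) ∧
      κ - 1 / (2 * (r * h (r ^ 2 * κ) + h κ) ^ 2) = 0 := by
  have hK_mono : StrictMonoOn (Kr h r) (Ico 0 (kmax r)) := strictMonoOn_Kr hmono hpos hr
  have hK_zero : Kr h r 0 < 0 := Kr_zero_neg hr.le (hpos 0 ⟨le_rfl, one_pos⟩)
  have hK_lim := tendsto_Kr_kmax hc hpos hlim hr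
  have hL : 0 < Kr (update h 1 1) r (kmax r) :=
    Kr_kmax_pos (fun k hk => update_one_pos hpos hk) (update_self _ _ _) hr
  exact ⟨hK_mono, hK_zero, ⟨_, hL, hK_lim⟩, hK_mono.existsUnique_eq_of_tendsto_nhdsLT
    (continuousOn_Kr hc hpos hr) (kmax_pos hr) hK_zero hL hK_lim⟩

/-- Let h : [0,1) → ℝ be continuous, strictly increasing, positive,
with h(0)=3/4, h(k) → 1 as k → 1⁻, continuously differentiable with h' > 0.
For each r > 0 and k_max := min{1, 1/r²}, the function
K_r(k) := k − 1/(2(r·h(r²k)+h(k))²) is strictly increasing on [0,k_max),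
K_r(0) < 0, K_r has a positive limit as k → k_max⁻, and K_r has a unique zero
κ(r) ∈ (0, k_max). -/
theorem K_r_unique_zero (h h' : ℝ → ℝ)
    (hc : ContinuousOn h (Set.Ico (0:ℝ) 1))
    (hmono : StrictMonoOn h (Set.Ico (0:ℝ) 1))
    (h0 : h 0 = 3/4)
    (hpos : ∀ k ∈ Set.Ico (0:ℝ) 1, 0 < h k)
    (hlim : Filter.Tendsto h (nhdsWithin (1:ℝ) (Set.Iio 1)) (nhds 1))
    (hderiv : ∀ k ∈ Set.Ico (0:ℝ) 1, HasDerivAt h (h' k) k)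
    (hderivc : ContinuousOn h' (Set.Ico (0:ℝ) 1))
    (hderivpos : ∀ k ∈ Set.Ico (0:ℝ) 1, 0 < h' k)
    (r : ℝ) (hr : 0 < r) :
    StrictMonoOn (fun k : ℝ => k - 1 / (2 * (r * h (r ^ 2 * k) + h k) ^ 2))
        (Set.Ico (0:ℝ) (min 1 (1 / r ^ 2))) ∧
    (0:ℝ) - 1 / (2 * (r * h (r ^ 2 * 0) + h 0) ^ 2) < 0 ∧
    (∃ L > (0:ℝ), Filter.Tendsto (fun k : ℝ => k - 1 / (2 * (r * h (r ^ 2 * k) + h k) ^ 2))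
        (nhdsWithin (min 1 (1 / r ^ 2)) (Set.Iio (min 1 (1 / r ^ 2)))) (nhds L)) ∧
    ∃! κ : ℝ, κ ∈ Set.Ioo (0:ℝ) (min 1 (1 / r ^ 2)) ∧
      κ - 1 / (2 * (r * h (r ^ 2 * κ) + h κ) ^ 2) = 0 :=
  K_r_unique_zero_general h hc hmono hpos hlim r hr
end

section
/- With notation as in the free-fall problem and k := m·q₀²/2 ∈ [0,1), the fall time satisfies σ = (q₀^{3/2}/2)·∫₀¹ √u / √((1-u)(1-ku)) du, where q₀ = q(0). -/
open Set Real MeasureTheory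

/-- With k := m·q₀²/2 ∈ [0,1), the fall time of the free fall
satisfies σ = (q₀^{3/2}/2)·∫₀¹ √u/√((1-u)(1-ku)) du. -/
theorem freefall_time_formula (σ m q₀ : ℝ) (q q' q'' : ℝ → ℝ)
    (hσ : 0 < σ) (hm : 0 ≤ m) (hq₀ : 0 < q₀)
    (hk : m * q₀ ^ 2 / 2 ∈ Set.Ico (0:ℝ) 1)
    (hqcont : ContinuousOn q (Set.Icc 0 σ))
    (hqderiv : ∀ t ∈ Set.Ico (0:ℝ) σ, HasDerivAt q (q' t) t)
    (hqderiv2 : ∀ t ∈ Set.Ico (0:ℝ) σ, HasDerivAt q' (q'' t) t)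
    (hqpos : ∀ t ∈ Set.Ico (0:ℝ) σ, 0 < q t)
    (hq0 : q 0 = q₀) (hq'0 : q' 0 = 0) (hqσ : q σ = 0)
    (hanti : StrictAntiOn q (Set.Icc 0 σ))
    (hode : ∀ t ∈ Set.Ico (0:ℝ) σ, q'' t = -2 / (q t) ^ 2 + m)
    (hvel : ∀ t ∈ Set.Ioo (0:ℝ) σ,
      q' t = -Real.sqrt (2 * (2 / q t - 2 / q₀ + m * q t - m * q₀))) :
    σ = q₀ ^ ((3:ℝ)/2) / 2 *
      ∫ u in Set.Ioo (0:ℝ) 1,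
        Real.sqrt u / Real.sqrt ((1 - u) * (1 - (m * q₀ ^ 2 / 2) * u)) := by
  obtain ⟨hk0, hk1⟩ := hk
  set k := m * q₀ ^ 2 / 2 with hkdef
  have hq₀' : q₀ ≠ 0 := ne_of_gt hq₀
  set g : ℝ → ℝ := fun u => Real.sqrt u / Real.sqrt ((1 - u) * (1 - k * u)) with hg
  set φ : ℝ → ℝ := fun t => q t / q₀ with hφ
  have hφderiv : ∀ t ∈ Ioo (0:ℝ) σ,
      HasDerivWithinAt φ (q' t / q₀) (Ioo 0 σ) t := by
    intro t ht
    exact ((hqderiv t ⟨ht.1.le, ht.2⟩).div_const q₀).hasDerivWithinAt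
  have hqlt : ∀ t ∈ Ioo (0:ℝ) σ, q t < q₀ := by
    intro t ht
    have := hanti (left_mem_Icc.mpr hσ.le) ⟨ht.1.le, ht.2.le⟩ ht.1
    rwa [hq0] at this
  have hqpos' : ∀ t ∈ Ioo (0:ℝ) σ, 0 < q t := fun t ht => hqpos t ⟨ht.1.le, ht.2⟩
  have hinj : InjOn φ (Ioo 0 σ) := by
    intro a ha b hb hab
    have hq : q a = q b := by
      have := hab
      simp only [hφ] at this
      field_simp at this
      exact this
    exact hanti.injOn ⟨ha.1.le, ha.2.le⟩ ⟨hb.1.le, hb.2.le⟩ hq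
  have himg : φ '' Ioo 0 σ = Ioo (0:ℝ) 1 := by
    apply Subset.antisymm
    · rintro _ ⟨t, ht, rfl⟩
      exact ⟨div_pos (hqpos' t ht) hq₀, (div_lt_one hq₀).mpr (hqlt t ht)⟩
    · intro y hy
      have h1 : y * q₀ ∈ Ioo (q σ) (q 0) := by
        rw [hq0, hqσ]
        exact ⟨mul_pos hy.1 hq₀, by nlinarith [hy.2]⟩
      obtain ⟨t, ht, hqt⟩ := intermediate_value_Ioo' hσ.le hqcont h1
      refine ⟨t, ht, ?_⟩
      simp only [hφ, hqt]
      field_simp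
  have hcov := integral_image_eq_integral_abs_deriv_smul measurableSet_Ioo hφderiv hinj g
  rw [himg] at hcov
  -- pointwise computation of the integrand
  have hconst : ∀ t ∈ Ioo (0:ℝ) σ,
      |q' t / q₀| • g (φ t) = 2 / q₀ ^ ((3:ℝ)/2) := by
    intro t ht
    set u : ℝ := q t / q₀ with hu
    have hu0 : 0 < u := div_pos (hqpos' t ht) hq₀
    have hu1 : u < 1 := (div_lt_one hq₀).mpr (hqlt t ht)
    have hqt : q t = u * q₀ := by rw [hu, div_mul_cancel₀ _ hq₀']
    have hku : k * u < 1 := by nlinarith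
    have hD : 0 < (1 - u) * (1 - k * u) := by nlinarith
    set E : ℝ := 2 * (2 / q t - 2 / q₀ + m * q t - m * q₀) with hE
    have hEval : E = 4 * ((1 - u) * (1 - k * u)) / (u * q₀) := by
      rw [hE, hqt, hkdef]
      field_simp
      ring
    have hEnonneg : 0 ≤ E := by
      rw [hEval]
      positivity
    have hq't : q' t = -Real.sqrt E := hvel t ht
    have habs : |q' t / q₀| = Real.sqrt E / q₀ := by
      rw [hq't, abs_div, abs_neg, abs_of_nonneg (Real.sqrt_nonneg E),
        abs_of_pos hq₀]
    have hEu : E * u = 4 * ((1 - u) * (1 - k * u)) / q₀ := by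
      rw [hEval]
      field_simp
    have hsq : Real.sqrt E * Real.sqrt u = Real.sqrt (E * u) :=
      (Real.sqrt_mul hEnonneg u).symm
    have hsqrtEu : Real.sqrt (E * u)
        = 2 * Real.sqrt ((1 - u) * (1 - k * u)) / Real.sqrt q₀ := by
      rw [hEu, Real.sqrt_div (by positivity), Real.sqrt_mul (by norm_num : (0:ℝ) ≤ 4)]
      rw [show (4:ℝ) = 2^2 by norm_num, Real.sqrt_sq (by norm_num : (0:ℝ) ≤ 2)]
    have hφt : φ t = u := rfl
    have hDsqrt : 0 < Real.sqrt ((1 - u) * (1 - k * u)) := Real.sqrt_pos.mpr hD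
    have hsqq₀ : 0 < Real.sqrt q₀ := Real.sqrt_pos.mpr hq₀
    have hrpow : q₀ ^ ((3:ℝ)/2) = q₀ * Real.sqrt q₀ := by
      rw [show (3:ℝ)/2 = 1 + 1/2 by norm_num, Real.rpow_add hq₀, Real.rpow_one,
        ← Real.sqrt_eq_rpow]
    rw [smul_eq_mul, habs, hφt, hg, hrpow]
    simp only []
    rw [div_mul_div_comm, hsq, hsqrtEu]
    field_simp
    have h := hDsqrt.ne'
    ring_nf at h ⊢
    field_simp
  have hrpow_pos : 0 < q₀ ^ ((3:ℝ)/2) := Real.rpow_pos_of_pos hq₀ _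
  rw [setIntegral_congr_fun measurableSet_Ioo hconst] at hcov
  rw [setIntegral_const, Real.volume_real_Ioo_of_le hσ.le, sub_zero,
    smul_eq_mul] at hcov
  rw [hcov]
  field_simp
end

section
/- With notation as in the free-fall problem and k := m·q₀²/2 ∈ [0,1), the mean value q̄ := (1/σ)∫₀^σ q(t) dt equals q₀·h(k), where h(k) = (∫₀¹ u^{3/2}/√((1-u)(1-ku)) du) / (∫₀¹ √u/√((1-u)(1-ku)) du). -/
open Set Real MeasureTheory

/-- With k := m·q₀²/2 ∈ [0,1), the mean value
q̄ = (1/σ)∫₀^σ q(t) dt of the free fall equals q₀·h(k), where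
h(k) = (∫₀¹ u^{3/2}/√((1-u)(1-ku)) du)/(∫₀¹ √u/√((1-u)(1-ku)) du). -/
theorem freefall_mean_formula (σ m q₀ : ℝ) (q q' q'' : ℝ → ℝ)
    (hσ : 0 < σ) (hm : 0 ≤ m) (hq₀ : 0 < q₀)
    (hk : m * q₀ ^ 2 / 2 ∈ Set.Ico (0:ℝ) 1)
    (hqcont : ContinuousOn q (Set.Icc 0 σ))
    (hqderiv : ∀ t ∈ Set.Ico (0:ℝ) σ, HasDerivAt q (q' t) t)
    (hqderiv2 : ∀ t ∈ Set.Ico (0:ℝ) σ, HasDerivAt q' (q'' t) t)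
    (hqpos : ∀ t ∈ Set.Ico (0:ℝ) σ, 0 < q t)
    (hq0 : q 0 = q₀) (hq'0 : q' 0 = 0) (hqσ : q σ = 0)
    (hanti : StrictAntiOn q (Set.Icc 0 σ))
    (hode : ∀ t ∈ Set.Ico (0:ℝ) σ, q'' t = -2 / (q t) ^ 2 + m)
    (hvel : ∀ t ∈ Set.Ioo (0:ℝ) σ,
      q' t = -Real.sqrt (2 * (2 / q t - 2 / q₀ + m * (q t - q₀)))) :
    (1 / σ) * ∫ t in Set.Ioo (0:ℝ) σ, q t =
      q₀ * ((∫ u in Set.Ioo (0:ℝ) 1,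
          u ^ ((3:ℝ)/2) / Real.sqrt ((1 - u) * (1 - (m * q₀ ^ 2 / 2) * u))) /
        (∫ u in Set.Ioo (0:ℝ) 1,
          Real.sqrt u / Real.sqrt ((1 - u) * (1 - (m * q₀ ^ 2 / 2) * u)))) := by
  set k : ℝ := m * q₀ ^ 2 / 2 with hkdef
  obtain ⟨hk0, hk1⟩ := hk
  set w : ℝ → ℝ := fun s => Real.sqrt (2 * (2 / s - 2 / q₀ + m * (s - q₀))) with hwdef
  -- algebraic identity
  have haux : ∀ s : ℝ, s ≠ 0 → 2 * (2 / s - 2 / q₀ + m * (s - q₀))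
      = 4 / s * ((1 - s / q₀) * (1 - k * (s / q₀))) := by
    intro s hs
    have hq₀' : q₀ ≠ 0 := ne_of_gt hq₀
    field_simp [hkdef]
    ring
  -- positivity of the inside on (0, q₀)
  have hins : ∀ s ∈ Ioo (0:ℝ) q₀, 0 < 2 * (2 / s - 2 / q₀ + m * (s - q₀)) := by
    intro s hs
    have hs0 : 0 < s := hs.1
    rw [haux s (ne_of_gt hs0)]
    have h1 : 0 < 4 / s := by positivity
    have h2 : 0 < 1 - s / q₀ := by
      have : s / q₀ < 1 := (div_lt_one hq₀).mpr hs.2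
      linarith
    have h3 : 0 < 1 - k * (s / q₀) := by
      have hsq : 0 < s / q₀ := div_pos hs.1 hq₀
      have hsq1 : s / q₀ < 1 := (div_lt_one hq₀).mpr hs.2
      nlinarith
    positivity
  have hwpos : ∀ s ∈ Ioo (0:ℝ) q₀, 0 < w s := fun s hs =>
    Real.sqrt_pos.mpr (hins s hs)
  -- the image of q
  have hmaps : ∀ t ∈ Ioo (0:ℝ) σ, q t ∈ Ioo (0:ℝ) q₀ := by
    intro t ht
    refine ⟨hqpos t ⟨ht.1.le, ht.2⟩, ?_⟩
    have := hanti (left_mem_Icc.mpr hσ.le) ⟨ht.1.le, ht.2.le⟩ ht.1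
    rwa [hq0] at this
  have himg : q '' Ioo 0 σ = Ioo 0 q₀ := by
    apply Subset.antisymm
    · rintro y ⟨t, ht, rfl⟩; exact hmaps t ht
    · intro y hy
      have h1 : y ∈ Icc (q σ) (q 0) := by
        rw [hqσ, hq0]; exact ⟨hy.1.le, hy.2.le⟩
      obtain ⟨t, ht, hty⟩ := intermediate_value_Icc' hσ.le hqcont h1
      refine ⟨t, ⟨?_, ?_⟩, hty⟩
      · rcases eq_or_lt_of_le ht.1 with h | h
        · exfalso; rw [← h, hq0] at hty; exact absurd hty.symm (ne_of_lt hy.2)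
        · exact h
      · rcases eq_or_lt_of_le ht.2 with h | h
        · exfalso; rw [h, hqσ] at hty; exact absurd hty.symm (ne_of_gt hy.1)
        · exact h
  -- change of variables: q on (0,σ)
  have hcov : ∀ g : ℝ → ℝ, ∫ y in Ioo (0:ℝ) q₀, g y
      = ∫ t in Ioo (0:ℝ) σ, |q' t| * g (q t) := by
    intro g
    rw [← himg]
    have := integral_image_eq_integral_abs_deriv_smul (measurableSet_Ioo)
      (fun t ht => (hqderiv t ⟨ht.1.le, ht.2⟩).hasDerivWithinAt)
      ((hanti.injOn).mono Ioo_subset_Icc_self) g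
    simpa [smul_eq_mul] using this
  -- change of variables: linear
  have hcov2 : ∀ g : ℝ → ℝ, ∫ y in Ioo (0:ℝ) q₀, g y
      = ∫ u in Ioo (0:ℝ) 1, q₀ * g (q₀ * u) := by
    intro g
    have himg2 : (fun u => q₀ * u) '' Ioo 0 1 = Ioo (0:ℝ) q₀ := by
      rw [show Ioo (0:ℝ) q₀ = Ioo (q₀ * 0) (q₀ * 1) by norm_num]
      exact image_mul_left_Ioo hq₀ 0 1
    rw [← himg2]
    have hderiv : ∀ u ∈ Ioo (0:ℝ) 1,
        HasDerivWithinAt (fun u => q₀ * u) q₀ (Ioo 0 1) u := by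
      intro u hu
      simpa using ((hasDerivAt_id u).const_mul q₀).hasDerivWithinAt
    have hinj : InjOn (fun u => q₀ * u) (Ioo 0 1) :=
      (mul_right_injective₀ (ne_of_gt hq₀)).injOn
    have := integral_image_eq_integral_abs_deriv_smul measurableSet_Ioo hderiv hinj g
    simpa [smul_eq_mul, abs_of_pos hq₀] using this
  -- |q' t| = w (q t)
  have habs : ∀ t ∈ Ioo (0:ℝ) σ, |q' t| = w (q t) := by
    intro t ht
    rw [hvel t ht, abs_neg, abs_of_nonneg (Real.sqrt_nonneg _)]
  -- the two integrals over (0, q₀)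
  have hI1 : ∫ t in Ioo (0:ℝ) σ, q t = ∫ y in Ioo (0:ℝ) q₀, y / w y := by
    rw [hcov (fun y => y / w y)]
    apply setIntegral_congr_fun measurableSet_Ioo
    intro t ht
    have hq := hmaps t ht
    simp only
    rw [habs t ht]
    field_simp [ne_of_gt (hwpos _ hq)]
  have hI2 : σ = ∫ y in Ioo (0:ℝ) q₀, 1 / w y := by
    rw [hcov (fun y => 1 / w y)]
    have : ∫ t in Ioo (0:ℝ) σ, |q' t| * (1 / w (q t)) = ∫ t in Ioo (0:ℝ) σ, (1:ℝ) := by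
      apply setIntegral_congr_fun measurableSet_Ioo
      intro t ht
      simp only
      rw [habs t ht]
      field_simp [ne_of_gt (hwpos _ (hmaps t ht))]
    rw [this, setIntegral_const, measureReal_def, Real.volume_Ioo, smul_eq_mul, mul_one, sub_zero,
      ENNReal.toReal_ofReal hσ.le]
  -- positivity of D
  have hDpos : ∀ u ∈ Ioo (0:ℝ) 1, 0 < Real.sqrt ((1 - u) * (1 - k * u)) := by
    intro u hu
    have h2 : 0 < 1 - u := by linarith [hu.2]
    have h3 : 0 < 1 - k * u := by nlinarith [hu.1, hu.2]
    exact Real.sqrt_pos.mpr (by positivity)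
  -- evaluate w (q₀ * u) for u ∈ (0,1)
  have hwval : ∀ u ∈ Ioo (0:ℝ) 1, w (q₀ * u)
      = 2 / Real.sqrt (q₀ * u) * Real.sqrt ((1 - u) * (1 - k * u)) := by
    intro u hu
    have hqu : (0:ℝ) < q₀ * u := mul_pos hq₀ hu.1
    have h1 : q₀ * u / q₀ = u := by field_simp
    rw [hwdef]
    simp only
    rw [haux _ (ne_of_gt hqu), h1,
      Real.sqrt_mul (show (0:ℝ) ≤ 4 / (q₀ * u) by positivity)]
    congr 1
    rw [Real.sqrt_div (by norm_num : (0:ℝ) ≤ 4),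
      show (4:ℝ) = 2 ^ 2 by norm_num, Real.sqrt_sq (by norm_num : (0:ℝ) ≤ 2)]
  have hsq₀ : 0 < Real.sqrt q₀ := Real.sqrt_pos.mpr hq₀
  -- first integral
  have hA : ∫ t in Ioo (0:ℝ) σ, q t
      = (q₀ ^ 2 * Real.sqrt q₀ / 2) * ∫ u in Ioo (0:ℝ) 1,
        u ^ ((3:ℝ)/2) / Real.sqrt ((1 - u) * (1 - k * u)) := by
    rw [hI1, hcov2 (fun y => y / w y), ← integral_const_mul]
    apply setIntegral_congr_fun measurableSet_Ioo
    intro u hu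
    simp only
    rw [hwval u hu, Real.sqrt_mul hq₀.le,
      show u ^ ((3:ℝ)/2) = u * Real.sqrt u by
        rw [Real.sqrt_eq_rpow, show (3:ℝ)/2 = 1 + 1/2 by norm_num,
          Real.rpow_add hu.1, Real.rpow_one]]
    have hsu : 0 < Real.sqrt u := Real.sqrt_pos.mpr hu.1
    have hD := hDpos u hu
    field_simp
  -- second integral
  have hB : σ = (q₀ * Real.sqrt q₀ / 2) * ∫ u in Ioo (0:ℝ) 1,
      Real.sqrt u / Real.sqrt ((1 - u) * (1 - k * u)) := by
    rw [hI2, hcov2 (fun y => 1 / w y), ← integral_const_mul]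
    apply setIntegral_congr_fun measurableSet_Ioo
    intro u hu
    simp only
    rw [hwval u hu, Real.sqrt_mul hq₀.le]
    have hsu : 0 < Real.sqrt u := Real.sqrt_pos.mpr hu.1
    have hD := hDpos u hu
    field_simp
  set A := ∫ u in Ioo (0:ℝ) 1, u ^ ((3:ℝ)/2) / Real.sqrt ((1 - u) * (1 - k * u))
  set B := ∫ u in Ioo (0:ℝ) 1, Real.sqrt u / Real.sqrt ((1 - u) * (1 - k * u))
  have hBpos : 0 < B := by
    by_contra h
    push_neg at h
    nlinarith [hB, mul_pos (mul_pos hq₀ hsq₀) hσ]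
  rw [hA, hB]
  have hBne : B ≠ 0 := ne_of_gt hBpos
  field_simp
end

section
/- Let q and z be related by the Levi-Civita transformation q(t) = z(τ(t))² with time change dt/q(t) = dτ/‖z‖², where z ∈ H¹(S¹,ℝ) has finitely many zeros. Then ∫₀¹ q̇(t)² dt = 4·‖z‖²·‖z'‖², where ‖z‖² = ∫₀¹ z(τ)² dτ and ‖z'‖² = ∫₀¹ z'(τ)² dτ. -/
open Set Real MeasureTheory intervalIntegral

/-!
Differentiating `t_z (τ t) = t` gives `τ' = ‖z‖² / z(τ)²`, so wherever `z (τ t) ≠ 0` the chain rule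
yields `q' = 2 z(τ) z'(τ) τ' = 2 ‖z‖² z'(τ) / z(τ)`. Substituting `t = t_z s`, `dt = z(s)² / ‖z‖² ds`,
turns `q'(t)²` into `4 ‖z‖² z'(s)²`. By periodicity `z` has only countably many zeros, so they are
null: `t_z` is strictly increasing, maps `(0, 1)` onto itself, and the zeros can be ignored in the
`s`-integral.
-/

theorem Function.Periodic.countable_preimage_of_countable_Ico {α β : Type*} [AddCommGroup α]
    [LinearOrder α] [IsOrderedAddMonoid α] [Archimedean α] {f : α → β} {c : α}
    (hf : Function.Periodic f c) (hc : 0 < c) {S : Set β} (h : (Ico 0 c ∩ f ⁻¹' S).Countable) :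
    (f ⁻¹' S).Countable := by
  refine (Set.countable_iUnion fun n : ℤ => h.image (· + n • c)).mono fun s hs => ?_
  have hmod := self_sub_toIcoDiv_zsmul hc 0 s
  refine mem_iUnion.2 ⟨toIcoDiv hc 0 s, toIcoMod hc 0 s, ⟨?_, ?_⟩, ?_⟩
  · simpa using toIcoMod_mem_Ico hc 0 s
  · rw [mem_preimage, ← hmod, hf.sub_zsmul_eq]; exact hs
  · exact sub_add_cancel s _

theorem intervalIntegral_pos_of_nonneg_of_null_zeros {g : ℝ → ℝ} (hg : Continuous g)
    (hg0 : 0 ≤ g) (hnull : volume (g ⁻¹' {0}) = 0) {a b : ℝ} (hab : a < b) :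
    0 < ∫ x in a..b, g x := by
  rw [integral_pos_iff_support_of_nonneg_ae (.of_forall hg0) (hg.intervalIntegrable a b)]
  have hsub : Ioc a b \ g ⁻¹' {0} ⊆ Function.support g ∩ Ioc a b := fun x hx => ⟨hx.2, hx.1⟩
  refine ⟨hab, lt_of_lt_of_le ?_ (measure_mono hsub)⟩
  rw [measure_sdiff_null hnull, Real.volume_Ioc]
  exact ENNReal.ofReal_pos.2 (sub_pos.2 hab)

theorem strictMono_intervalIntegral_of_nonneg_of_null_zeros {g : ℝ → ℝ} (hg : Continuous g)
    (hg0 : 0 ≤ g) (hnull : volume (g ⁻¹' {0}) = 0) (a : ℝ) :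
    StrictMono fun x => ∫ s in a..x, g s := fun x y hxy => by
  dsimp only
  rw [← integral_add_adjacent_intervals (hg.intervalIntegrable a x) (hg.intervalIntegrable x y)]
  linarith [intervalIntegral_pos_of_nonneg_of_null_zeros hg hg0 hnull hxy]

theorem StrictMono.hasDerivAt_of_rightInverse {ψ τ : ℝ → ℝ} (hψ : StrictMono ψ)
    (hτ : Function.RightInverse τ ψ) {t c : ℝ} (h : HasDerivAt ψ c (τ t)) (hc : c ≠ 0) :
    HasDerivAt τ c⁻¹ t := by
  have hcont : Continuous τ := (hψ.orderIsoOfRightInverse ψ τ hτ).symm.continuous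
  exact h.of_local_left_inverse hcont.continuousAt hc (.of_forall hτ)

theorem sq_preimage_zero {α M : Type*} [MonoidWithZero M] [NoZeroDivisors M] (f : α → M) :
    (f ^ 2) ⁻¹' {0} = f ⁻¹' {0} := by
  ext x
  simp

/-- The paper's `t_z`. -/
noncomputable def levCivitaTime (z : ℝ → ℝ) (x : ℝ) : ℝ :=
  (∫ s in (0:ℝ)..x, z s ^ 2) / ∫ s in (0:ℝ)..1, z s ^ 2

section levCivitaTime

variable {z : ℝ → ℝ}

theorem hasDerivAt_levCivitaTime (hz : Continuous z) (x : ℝ) :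
    HasDerivAt (levCivitaTime z) (z x ^ 2 / ∫ s in (0:ℝ)..1, z s ^ 2) x :=
  ((hz.pow 2).integral_hasStrictDerivAt 0 x).hasDerivAt.div_const _

theorem intervalIntegral_sq_pos (hz : Continuous z) (hnull : volume (z ⁻¹' {0}) = 0)
    {a b : ℝ} (hab : a < b) : 0 < ∫ s in a..b, z s ^ 2 :=
  intervalIntegral_pos_of_nonneg_of_null_zeros (hz.pow 2) (fun s => sq_nonneg _)
    (by rwa [sq_preimage_zero]) hab

theorem strictMono_levCivitaTime (hz : Continuous z) (hnull : volume (z ⁻¹' {0}) = 0) :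
    StrictMono (levCivitaTime z) :=
  (strictMono_intervalIntegral_of_nonneg_of_null_zeros (hz.pow 2) (fun s => sq_nonneg _)
    (by rwa [sq_preimage_zero]) 0).div_const (intervalIntegral_sq_pos hz hnull one_pos)

theorem levCivitaTime_zero : levCivitaTime z 0 = 0 := by
  simp [levCivitaTime]

theorem levCivitaTime_one (h : ∫ s in (0:ℝ)..1, z s ^ 2 ≠ 0) : levCivitaTime z 1 = 1 :=
  div_self h

theorem rightInverse_levCivitaTime {τ : ℝ → ℝ} (h : ∫ s in (0:ℝ)..1, z s ^ 2 ≠ 0)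
    (hτ : ∀ t, ∫ s in (0:ℝ)..τ t, z s ^ 2 = (∫ s in (0:ℝ)..1, z s ^ 2) * t) :
    Function.RightInverse τ (levCivitaTime z) := fun t => by
  rw [levCivitaTime, hτ, mul_div_cancel_left₀ t h]

theorem image_levCivitaTime_Ioo (hz : Continuous z) (hnull : volume (z ⁻¹' {0}) = 0) :
    levCivitaTime z '' Ioo 0 1 = Ioo 0 1 := by
  have hcont : Continuous (levCivitaTime z) :=
    continuous_iff_continuousAt.2 fun x => (hasDerivAt_levCivitaTime hz x).continuousAt
  rw [hcont.image_Ioo_of_strictMono (a := 0) (b := 1) (strictMono_levCivitaTime hz hnull),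
    levCivitaTime_zero, levCivitaTime_one (intervalIntegral_sq_pos hz hnull one_pos).ne']

theorem setIntegral_Ioo_eq_setIntegral_Ioo_comp_levCivitaTime {E : Type*} [NormedAddCommGroup E]
    [NormedSpace ℝ E] (hz : Continuous z) (hnull : volume (z ⁻¹' {0}) = 0) (F : ℝ → E) :
    ∫ t in Ioo 0 1, F t =
      ∫ s in Ioo 0 1, (z s ^ 2 / ∫ s in (0:ℝ)..1, z s ^ 2) • F (levCivitaTime z s) := by
  have hI := intervalIntegral_sq_pos hz hnull one_pos
  calc ∫ t in Ioo 0 1, F t = ∫ t in levCivitaTime z '' Ioo 0 1, F t := by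
        rw [image_levCivitaTime_Ioo hz hnull]
    _ = ∫ s in Ioo 0 1, |z s ^ 2 / ∫ s in (0:ℝ)..1, z s ^ 2| • F (levCivitaTime z s) :=
        integral_image_eq_integral_abs_deriv_smul measurableSet_Ioo
          (fun s _ => (hasDerivAt_levCivitaTime hz s).hasDerivWithinAt)
          (strictMono_levCivitaTime hz hnull).injective.injOn F
    _ = _ := setIntegral_congr_fun measurableSet_Ioo fun s _ => by
        rw [abs_of_nonneg (div_nonneg (sq_nonneg _) hI.le)]

end levCivitaTime

theorem hasDerivAt_sq_comp_rightInverse {z ψ τ : ℝ → ℝ} {s dz I : ℝ} (hψ : StrictMono ψ)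
    (hτ : Function.RightInverse τ ψ) (hψ' : HasDerivAt ψ (z s ^ 2 / I) s)
    (hz : HasDerivAt z dz s) (hzs : z s ≠ 0) (hI : I ≠ 0) :
    HasDerivAt (fun t => z (τ t) ^ 2) (2 * I * dz / z s) (ψ s) := by
  have hτψ : τ (ψ s) = s := hψ.injective (hτ (ψ s))
  have hτ' : HasDerivAt τ (z s ^ 2 / I)⁻¹ (ψ s) :=
    hψ.hasDerivAt_of_rightInverse hτ (by rwa [hτψ]) (by positivity)
  rw [← hτψ] at hz
  refine ((hz.comp _ hτ').pow 2).congr_deriv ?_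
  simp only [Function.comp_apply, hτψ]
  field_simp
  norm_num
  ring

theorem levi_civita_kinetic_general (z z' τ q q' : ℝ → ℝ)
    (hper : Function.Periodic z 1)
    (hzderiv : ∀ s, HasDerivAt z (z' s) s)
    (hfin : {s : ℝ | s ∈ Set.Ico (0:ℝ) 1 ∧ z s = 0}.Finite)
    (hτ : ∀ t, (∫ s in (0:ℝ)..τ t, (z s) ^ 2) = (∫ s in (0:ℝ)..1, (z s) ^ 2) * t)
    (hq : ∀ t, q t = (z (τ t)) ^ 2)
    (hq' : ∀ t, q t ≠ 0 → HasDerivAt q (q' t) t) :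
    ∫ t in Set.Ioo (0:ℝ) 1, (q' t) ^ 2 =
      4 * (∫ s in Set.Ioo (0:ℝ) 1, (z s) ^ 2) *
        (∫ s in Set.Ioo (0:ℝ) 1, (z' s) ^ 2) := by
  have hz : Continuous z := continuous_iff_continuousAt.2 fun s => (hzderiv s).continuousAt
  have hnull : volume (z ⁻¹' {0}) = 0 :=
    (hper.countable_preimage_of_countable_Ico one_pos (S := {0}) hfin.countable).measure_zero _
  have hI := intervalIntegral_sq_pos hz hnull one_pos
  have hψ := strictMono_levCivitaTime hz hnull
  have hτψ := rightInverse_levCivitaTime hI.ne' hτ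
  have hq'_comp : ∀ s, z s ≠ 0 →
      q' (levCivitaTime z s) = 2 * (∫ s in (0:ℝ)..1, z s ^ 2) * z' s / z s := fun s hzs => by
    have hderiv := hasDerivAt_sq_comp_rightInverse hψ hτψ (hasDerivAt_levCivitaTime hz s)
      (hzderiv s) hzs hI.ne'
    rw [← funext hq] at hderiv
    have hq_ne : q (levCivitaTime z s) ≠ 0 := by rw [hq, hψ.injective (hτψ _)]; positivity
    exact (hq' _ hq_ne).unique hderiv
  have hkinetic : ∀ᵐ s, s ∈ Ioo (0:ℝ) 1 →
      (z s ^ 2 / ∫ s in (0:ℝ)..1, z s ^ 2) • q' (levCivitaTime z s) ^ 2 =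
        4 * (∫ s in (0:ℝ)..1, z s ^ 2) * z' s ^ 2 := by
    filter_upwards [measure_eq_zero_iff_ae_notMem.1 hnull] with s (hs : z s ≠ 0) _
    rw [hq'_comp s hs, smul_eq_mul]
    field_simp
    ring
  rw [setIntegral_Ioo_eq_setIntegral_Ioo_comp_levCivitaTime hz hnull,
    setIntegral_congr_ae measurableSet_Ioo hkinetic, MeasureTheory.integral_const_mul,
    intervalIntegral.integral_of_le zero_le_one, integral_Ioc_eq_integral_Ioo]

/-- If q(t) = z(τ(t))² under the Levi-Civita time change
(τ the inverse of t_z(τ) = ‖z‖⁻²∫₀^τ z², i.e. ∫₀^{τ(t)} z² = ‖z‖²·t),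
with z ∈ H¹(S¹,ℝ) (modelled as a 1-periodic function with derivative z')
having finitely many zeros, then ∫₀¹ q̇(t)² dt = 4‖z‖²‖z'‖². -/
theorem levi_civita_kinetic (z z' τ q q' : ℝ → ℝ)
    (hper : Function.Periodic z 1)
    (hzderiv : ∀ s, HasDerivAt z (z' s) s)
    (hz'cont : Continuous z')
    (hfin : {s : ℝ | s ∈ Set.Ico (0:ℝ) 1 ∧ z s = 0}.Finite)
    (hτ0 : τ 0 = 0)
    (hτ : ∀ t, (∫ s in (0:ℝ)..τ t, (z s) ^ 2) = (∫ s in (0:ℝ)..1, (z s) ^ 2) * t)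
    (hq : ∀ t, q t = (z (τ t)) ^ 2)
    (hq' : ∀ t, q t ≠ 0 → HasDerivAt q (q' t) t) :
    ∫ t in Set.Ioo (0:ℝ) 1, (q' t) ^ 2 =
      4 * (∫ s in Set.Ioo (0:ℝ) 1, (z s) ^ 2) *
        (∫ s in Set.Ioo (0:ℝ) 1, (z' s) ^ 2) :=
  levi_civita_kinetic_general z z' τ q q' hper hzderiv hfin hτ hq hq'
end
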